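/- arXiv:2101.01318 — 11 statements merged into one kernel-verified Lean document; each statement's English description precedes it below -/
import Mathlib

section
/- Fix a positive integer N. If every full admissible type for ground-set size N is realizable, then every admissible type for ground-set size N is realizable. -/
/-- The family `m` (shape `γ` has entries `m γ 0, …, m γ (p γ - 1)`) is a type of shapes
for ground-set size `N`: each shape is a multiset of nonnegative integers summing to at
most `N`. -/
def IsType (N k : ℕ) (p : Fin k → ℕ) (m : (γ : Fin k) → Fin (p γ) → ℕ) : Prop :=
  ∀ γ, ∑ j, m γ j ≤ N

/-- The type is admissible for `N`: for every `0 ≤ x ≤ N`, the total number of entries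
equal to `x` over all shapes is at most `C(N,x)`. -/
def Admissible (N k : ℕ) (p : Fin k → ℕ) (m : (γ : Fin k) → Fin (p γ) → ℕ) : Prop :=
  ∀ x ≤ N,
    ((Finset.univ : Finset ((γ : Fin k) × Fin (p γ))).filter
      (fun q => m q.1 q.2 = x)).card ≤ N.choose x

/-- The type is full: equality holds in every admissibility inequality. -/
def Full (N k : ℕ) (p : Fin k → ℕ) (m : (γ : Fin k) → Fin (p γ) → ℕ) : Prop :=
  ∀ x ≤ N,
    ((Finset.univ : Finset ((γ : Fin k) × Fin (p γ))).filter
      (fun q => m q.1 q.2 = x)).card = N.choose x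

/-- The type is realizable for `N`: there are sets `S γ j ⊆ {1,…,N}` with
`|S γ j| = m γ j`, pairwise disjoint within each `γ`, and pairwise distinct over all
pairs `(γ, j)`. -/
def Realizable (N k : ℕ) (p : Fin k → ℕ) (m : (γ : Fin k) → Fin (p γ) → ℕ) : Prop :=
  ∃ S : (γ : Fin k) → Fin (p γ) → Finset (Fin N),
    (∀ γ j, (S γ j).card = m γ j) ∧
    (∀ γ, ∀ j j' : Fin (p γ), j ≠ j' → Disjoint (S γ j) (S γ j')) ∧
    (∀ q q' : (γ : Fin k) × Fin (p γ), q ≠ q' → S q.1 q.2 ≠ S q'.1 q'.2)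


/-- Extensionality for sigma types of `Fin`s via values. -/
lemma sigmaFinExt {k : ℕ} {p : Fin k → ℕ} {q q' : (γ : Fin k) × Fin (p γ)}
    (h1 : q.1.val = q'.1.val) (h2 : q.2.val = q'.2.val) : q = q' := by
  obtain ⟨⟨a, ha⟩, b⟩ := q
  obtain ⟨⟨a', ha'⟩, b'⟩ := q'
  dsimp only at h1
  subst h1
  dsimp only at h2
  exact congrArg _ (Fin.ext h2)

lemma sum_fin_congr {a b : ℕ} (h : a = b) (f : Fin a → ℕ) (g : Fin b → ℕ)
    (hfg : ∀ i : Fin a, f i = g (Fin.cast h i)) : ∑ i, f i = ∑ i, g i := by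
  subst h
  exact Finset.sum_congr rfl fun i _ => hfg i

lemma filter_card_congr {a b : ℕ} (h : a = b) (f : Fin a → ℕ) (g : Fin b → ℕ)
    (hfg : ∀ i : Fin a, f i = g (Fin.cast h i)) (x : ℕ) :
    (Finset.univ.filter (fun j => f j = x)).card
      = (Finset.univ.filter (fun j => g j = x)).card := by
  subst h
  congr 1
  refine Finset.filter_congr fun j _ => ?_
  simp [hfg j]

lemma card_filter_sigma {k : ℕ} (p : Fin k → ℕ) (m : (γ : Fin k) → Fin (p γ) → ℕ) (x : ℕ) :
    ((Finset.univ : Finset ((γ : Fin k) × Fin (p γ))).filter (fun q => m q.1 q.2 = x)).card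
      = ∑ γ, (Finset.univ.filter (fun j => m γ j = x)).card := by
  rw [← Finset.card_sigma]
  congr 1
  ext ⟨γ, j⟩
  simp

theorem stmt4_aux (N : ℕ) (hN : 0 < N)
    (h : ∀ (k : ℕ) (p : Fin k → ℕ) (m : (γ : Fin k) → Fin (p γ) → ℕ),
      (∀ γ, ∑ j, m γ j ≤ N) →
      (∀ x ≤ N, ((Finset.univ : Finset ((γ : Fin k) × Fin (p γ))).filter
        (fun q => m q.1 q.2 = x)).card = N.choose x) →
      ∃ S : (γ : Fin k) → Fin (p γ) → Finset (Fin N),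
        (∀ γ j, (S γ j).card = m γ j) ∧
        (∀ γ, ∀ j j' : Fin (p γ), j ≠ j' → Disjoint (S γ j) (S γ j')) ∧
        (∀ q q' : (γ : Fin k) × Fin (p γ), q ≠ q' → S q.1 q.2 ≠ S q'.1 q'.2)) :
    ∀ (k : ℕ) (p : Fin k → ℕ) (m : (γ : Fin k) → Fin (p γ) → ℕ),
      (∀ γ, ∑ j, m γ j ≤ N) →
      (∀ x ≤ N, ((Finset.univ : Finset ((γ : Fin k) × Fin (p γ))).filter
        (fun q => m q.1 q.2 = x)).card ≤ N.choose x) →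
      ∃ S : (γ : Fin k) → Fin (p γ) → Finset (Fin N),
        (∀ γ j, (S γ j).card = m γ j) ∧
        (∀ γ, ∀ j j' : Fin (p γ), j ≠ j' → Disjoint (S γ j) (S γ j')) ∧
        (∀ q q' : (γ : Fin k) × Fin (p γ), q ≠ q' → S q.1 q.2 ≠ S q'.1 q'.2) := by
  intro k p m hT hA
  -- deficiency counts
  let c : ℕ → ℕ := fun x =>
    ((Finset.univ : Finset ((γ : Fin k) × Fin (p γ))).filter (fun q => m q.1 q.2 = x)).card
  let d : Fin (N + 1) → ℕ := fun x => N.choose x.val - c x.val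
  let t : ℕ := Fintype.card ((x : Fin (N + 1)) × Fin (d x))
  let ψ : Fin t ≃ (x : Fin (N + 1)) × Fin (d x) := (Fintype.equivFin _).symm
  have hkt : ∀ γ : Fin k, γ.val < k + t := fun γ => lt_of_lt_of_le γ.2 (Nat.le_add_right k t)
  -- the extended type
  let p' : Fin (k + t) → ℕ := fun γ => if h : γ.val < k then p ⟨γ.val, h⟩ else 1
  let m' : (γ : Fin (k + t)) → Fin (p' γ) → ℕ := fun γ j =>
    if h : γ.val < k then
      m ⟨γ.val, h⟩ ⟨j.val, lt_of_lt_of_le j.2 (le_of_eq (dif_pos h))⟩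
    else (ψ ⟨γ.val - k, by have := γ.2; omega⟩).1.val
  have hT' : ∀ γ, ∑ j, m' γ j ≤ N := by
    intro γ
    by_cases hγ : γ.val < k
    · have hpe : p' γ = p ⟨γ.val, hγ⟩ := dif_pos hγ
      have : ∑ j, m' γ j = ∑ j : Fin (p ⟨γ.val, hγ⟩), m ⟨γ.val, hγ⟩ j :=
        sum_fin_congr hpe _ _ (fun j => dif_pos hγ)
      rw [this]
      exact hT _
    · have hpe : p' γ = 1 := dif_neg hγ
      have pf : γ.val - k < t := by have := γ.2; omega
      have hv : ∀ j : Fin (p' γ), m' γ j = (ψ ⟨γ.val - k, pf⟩).1.val := fun j => dif_neg hγ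
      calc ∑ j, m' γ j = ∑ _j : Fin (p' γ), (ψ ⟨γ.val - k, pf⟩).1.val :=
            Finset.sum_congr rfl fun j _ => hv j
        _ = p' γ * (ψ ⟨γ.val - k, pf⟩).1.val := by
            simp [Finset.sum_const, Finset.card_univ, mul_comm]
        _ ≤ N := by
            rw [hpe, one_mul]
            have := (ψ ⟨γ.val - k, pf⟩).1.2
            omega
  have hF' : ∀ x ≤ N, ((Finset.univ : Finset ((γ : Fin (k + t)) × Fin (p' γ))).filter
      (fun q => m' q.1 q.2 = x)).card = N.choose x := by
    intro x hx
    have hxlt : x < N + 1 := by omega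
    rw [card_filter_sigma, Fin.sum_univ_add]
    have h1 : ∀ γ : Fin k,
        (Finset.univ.filter (fun j : Fin (p' (Fin.castAdd t γ)) =>
          m' (Fin.castAdd t γ) j = x)).card
          = (Finset.univ.filter (fun j : Fin (p γ) => m γ j = x)).card := by
      intro γ
      exact filter_card_congr (dif_pos γ.2) _ _ (fun j => dif_pos γ.2) x
    have h2 : ∀ i : Fin t,
        (Finset.univ.filter (fun j : Fin (p' (Fin.natAdd k i)) =>
          m' (Fin.natAdd k i) j = x)).card
          = if (ψ i).1.val = x then 1 else 0 := by
      intro i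
      have hnk : ¬ (Fin.natAdd k i).val < k := by simp
      have pf : (Fin.natAdd k i).val - k < t := by
        have := i.2; show k + i.val - k < t; omega
      have e2 : (⟨(Fin.natAdd k i).val - k, pf⟩ : Fin t) = i :=
        Fin.ext (by show k + i.val - k = i.val; omega)
      have hv : ∀ j : Fin (p' (Fin.natAdd k i)),
          m' (Fin.natAdd k i) j = (ψ i).1.val := by
        intro j
        have e1 : m' (Fin.natAdd k i) j = (ψ ⟨(Fin.natAdd k i).val - k, pf⟩).1.val :=
          dif_neg hnk
        rw [e1, e2]
      have hfe : (Finset.univ.filter (fun j : Fin (p' (Fin.natAdd k i)) =>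
          m' (Fin.natAdd k i) j = x))
            = Finset.univ.filter (fun _ : Fin (p' (Fin.natAdd k i)) => (ψ i).1.val = x) :=
        Finset.filter_congr fun j _ => by rw [hv j]
      rw [hfe, Finset.filter_const]
      split_ifs with hh
      · rw [Finset.card_univ, Fintype.card_fin]
        exact dif_neg hnk
      · simp
    rw [Finset.sum_congr rfl (fun γ _ => h1 γ), Finset.sum_congr rfl (fun i _ => h2 i)]
    have hsum2 : ∑ i : Fin t, (if (ψ i).1.val = x then 1 else 0) = d ⟨x, hxlt⟩ := by
      rw [Equiv.sum_comp ψ (fun ε => if ε.1.val = x then 1 else 0)]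
      rw [← Finset.card_filter]
      have := card_filter_sigma d (fun x' (_ : Fin (d x')) => x'.val) x
      rw [this]
      have h3 : ∀ x' : Fin (N + 1),
          (Finset.univ.filter (fun _ : Fin (d x') => x'.val = x)).card
            = if x' = ⟨x, hxlt⟩ then d x' else 0 := by
        intro x'
        rw [Finset.filter_const]
        split_ifs with ha hb hb
        · simp [Finset.card_univ]
        · exact absurd (Fin.ext ha) hb
        · exact absurd (congrArg Fin.val hb) ha
        · simp
      rw [Finset.sum_congr rfl (fun x' _ => h3 x'), Finset.sum_ite_eq' Finset.univ ⟨x, hxlt⟩ d]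
      simp
    rw [hsum2, ← card_filter_sigma p m x]
    have hle : c x ≤ N.choose x := hA x hx
    show c x + (N.choose x - c x) = N.choose x
    omega
  obtain ⟨S', hS1, hS2, hS3⟩ := h (k + t) p' m' hT' hF'
  let ι : ((γ : Fin k) × Fin (p γ)) → ((γ : Fin (k + t)) × Fin (p' γ)) := fun q =>
    ⟨⟨q.1.val, hkt q.1⟩, ⟨q.2.val, lt_of_lt_of_le q.2.2
      (le_of_eq ((dif_pos q.1.2 : p' ⟨q.1.val, hkt q.1⟩ = p q.1)).symm)⟩⟩
  refine ⟨fun γ j => S' (ι ⟨γ, j⟩).1 (ι ⟨γ, j⟩).2, ?_, ?_, ?_⟩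
  · intro γ j
    rw [hS1]
    exact dif_pos γ.2
  · intro γ j j' hjj'
    refine hS2 (ι ⟨γ, j⟩).1 (ι ⟨γ, j⟩).2 (ι ⟨γ, j'⟩).2 ?_
    intro hc
    have hval := congrArg Fin.val hc
    exact hjj' (Fin.ext hval)
  · intro q q' hne
    exact hS3 (ι q) (ι q') (fun hc => hne (sigmaFinExt
      (congrArg (fun r : (γ : Fin (k + t)) × Fin (p' γ) => r.1.val) hc)
      (congrArg (fun r : (γ : Fin (k + t)) × Fin (p' γ) => r.2.val) hc)))

/-- If every full admissible type for ground-set size `N` is realizable, then every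
admissible type for ground-set size `N` is realizable. -/
theorem stmt4 (N : ℕ) (hN : 0 < N)
    (h : ∀ (k : ℕ) (p : Fin k → ℕ) (m : (γ : Fin k) → Fin (p γ) → ℕ),
      IsType N k p m → Full N k p m → Realizable N k p m) :
    ∀ (k : ℕ) (p : Fin k → ℕ) (m : (γ : Fin k) → Fin (p γ) → ℕ),
      IsType N k p m → Admissible N k p m → Realizable N k p m := by
  exact fun k p m hT hA => stmt4_aux N hN h k p m hT hA
end

section
/- Let N be a positive integer and let 𝓜 = {M₁,…,M_k} be a full admissible type for ground-set size N, where M_γ has entries m_{γ,1},…,m_{γ,p_γ}. If 𝓜 has a τ-realization for some integer 0 ≤ τ < N, then 𝓜 has a (τ+1)-realization. -/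
/-- A `τ`-realization of the type: sets `S γ j ⊆ X_τ = {1,…,τ}` (here the first `τ`
elements of `Fin N`) such that for every `T ⊆ X_τ` and every `0 ≤ ℓ ≤ N`, the number of
pairs `(γ,j)` with `S γ j = T` and `m γ j = ℓ` equals `C(N−τ, ℓ−|T|)`, where the binomial
coefficient is `0` when `ℓ − |T| < 0` or `ℓ − |T| > N − τ`. -/
def IsTauRealization (N k τ : ℕ) (p : Fin k → ℕ) (m : (γ : Fin k) → Fin (p γ) → ℕ)
    (S : (γ : Fin k) → Fin (p γ) → Finset (Fin N)) : Prop :=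
  (∀ γ j, ∀ r ∈ S γ j, (r : ℕ) < τ) ∧
  ∀ T : Finset (Fin N), (∀ r ∈ T, (r : ℕ) < τ) → ∀ ℓ ≤ N,
    ((Finset.univ : Finset ((γ : Fin k) × Fin (p γ))).filter
        (fun q => S q.1 q.2 = T ∧ m q.1 q.2 = ℓ)).card
      = if T.card ≤ ℓ then (N - τ).choose (ℓ - T.card) else 0

/-- If a full admissible type for ground-set size `N` has a `τ`-realization for some
`0 ≤ τ < N`, then it has a `(τ+1)`-realization. -/
theorem stmt5 (N : ℕ) (hN : 0 < N) (k : ℕ) (p : Fin k → ℕ)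
    (m : (γ : Fin k) → Fin (p γ) → ℕ)
    (htype : IsType N k p m) (hfull : Full N k p m)
    (τ : ℕ) (hτ : τ < N)
    (S : (γ : Fin k) → Fin (p γ) → Finset (Fin N))
    (hS : IsTauRealization N k τ p m S) :
    ∃ S' : (γ : Fin k) → Fin (p γ) → Finset (Fin N),
      IsTauRealization N k (τ + 1) p m S' := by
  classical
  obtain ⟨hSτ, hcount⟩ := hS
  set i : Fin N := ⟨τ, hτ⟩ with hidef
  have hiS : ∀ γ j, i ∉ S γ j := by
    intro γ j h
    have := hSτ γ j i h
    simp [hidef] at this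
  -- choose, in each class (T, ℓ), a subfamily to which we add the new point `i`
  have hchoice : ∀ T : Finset (Fin N), ∀ ℓ : ℕ,
      ∃ A : Finset ((γ : Fin k) × Fin (p γ)),
        A ⊆ Finset.univ.filter (fun q => S q.1 q.2 = T ∧ m q.1 q.2 = ℓ) ∧
        A.card = min (if T.card + 1 ≤ ℓ then (N - (τ+1)).choose (ℓ - T.card - 1) else 0)
          ((Finset.univ.filter
            (fun q : (γ : Fin k) × Fin (p γ) => S q.1 q.2 = T ∧ m q.1 q.2 = ℓ)).card) :=
    fun T ℓ => Finset.exists_subset_card_eq (min_le_right _ _)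
  choose A hAsub hAcard using hchoice
  -- when T is a legitimate subset and ℓ ≤ N, the min is the first argument
  have hAcard' : ∀ T : Finset (Fin N), (∀ r ∈ T, (r:ℕ) < τ) → ∀ ℓ ≤ N,
      (A T ℓ).card = if T.card + 1 ≤ ℓ then (N - (τ+1)).choose (ℓ - T.card - 1) else 0 := by
    intro T hT ℓ hℓ
    rw [hAcard, hcount T hT ℓ hℓ, min_eq_left]
    split_ifs with h1 h2
    · have e1 : N - τ = (N - (τ+1)) + 1 := by omega
      have e2 : ℓ - T.card = (ℓ - T.card - 1) + 1 := by omega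
      rw [e1, e2, Nat.choose_succ_succ]
      exact Nat.le_add_right _ _
    · omega
    · exact Nat.zero_le _
    · exact le_refl 0
  refine ⟨fun γ j => if ⟨γ, j⟩ ∈ A (S γ j) (m γ j) then insert i (S γ j) else S γ j, ?_, ?_⟩
  · intro γ j r hr
    simp only [] at hr
    by_cases hq : (⟨γ, j⟩ : (γ : Fin k) × Fin (p γ)) ∈ A (S γ j) (m γ j)
    · rw [if_pos hq] at hr
      rcases Finset.mem_insert.mp hr with h | h
      · subst h; simp [hidef]
      · exact Nat.lt_succ_of_lt (hSτ γ j r h)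
    · rw [if_neg hq] at hr
      exact Nat.lt_succ_of_lt (hSτ γ j r hr)
  · intro T hT ℓ hℓ
    by_cases hiT : i ∈ T
    · -- new sets equal to T come exactly from the chosen subfamily of class (T.erase i, ℓ)
      set T₀ := T.erase i with hT₀
      have hT₀' : ∀ r ∈ T₀, (r:ℕ) < τ := by
        intro r hr
        have h1 := hT r (Finset.mem_of_mem_erase hr)
        have h2 := Finset.ne_of_mem_erase hr
        have h3 : (r:ℕ) ≠ τ := by
          intro h
          exact h2 (Fin.ext (show (r:ℕ) = (i:ℕ) from h))
        omega
      have hTins : T = insert i T₀ := (Finset.insert_erase hiT).symm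
      have key : (Finset.univ.filter (fun q : (γ : Fin k) × Fin (p γ) =>
          (if q ∈ A (S q.1 q.2) (m q.1 q.2) then insert i (S q.1 q.2) else S q.1 q.2) = T
          ∧ m q.1 q.2 = ℓ)) = A T₀ ℓ := by
        ext q
        simp only [Finset.mem_filter, Finset.mem_univ, true_and]
        constructor
        · rintro ⟨hq1, hq2⟩
          by_cases hq : q ∈ A (S q.1 q.2) (m q.1 q.2)
          · rw [if_pos hq] at hq1
            have hSq : S q.1 q.2 = T₀ := by
              rw [hT₀, ← hq1, Finset.erase_insert (hiS q.1 q.2)]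
            rw [hSq, hq2] at hq
            exact hq
          · rw [if_neg hq] at hq1
            exact absurd (hq1 ▸ hiT) (hiS q.1 q.2)
        · intro hq
          have hmem := hAsub T₀ ℓ hq
          simp only [Finset.mem_filter, Finset.mem_univ, true_and] at hmem
          obtain ⟨hq1, hq2⟩ := hmem
          have hq' : q ∈ A (S q.1 q.2) (m q.1 q.2) := by rw [hq1, hq2]; exact hq
          rw [if_pos hq', hq1, hq2]
          exact ⟨hTins.symm, rfl⟩
      rw [key, hAcard' T₀ hT₀' ℓ hℓ]
      have hcard : T.card = T₀.card + 1 := by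
        rw [hTins, Finset.card_insert_of_notMem (Finset.notMem_erase i T)]
      rw [hcard]
      split_ifs with h
      · rw [Nat.sub_sub]
      · rfl
    · -- new sets equal to T: old class (T, ℓ) minus the chosen subfamily
      have hT' : ∀ r ∈ T, (r:ℕ) < τ := by
        intro r hr
        have h1 := hT r hr
        have h3 : (r:ℕ) ≠ τ := by
          intro h
          exact hiT (Fin.ext (show (r:ℕ) = (i:ℕ) from h) ▸ hr)
        omega
      have key : (Finset.univ.filter (fun q : (γ : Fin k) × Fin (p γ) =>
          (if q ∈ A (S q.1 q.2) (m q.1 q.2) then insert i (S q.1 q.2) else S q.1 q.2) = T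
          ∧ m q.1 q.2 = ℓ)) =
          (Finset.univ.filter (fun q : (γ : Fin k) × Fin (p γ) =>
            S q.1 q.2 = T ∧ m q.1 q.2 = ℓ)) \ A T ℓ := by
        ext q
        simp only [Finset.mem_filter, Finset.mem_sdiff, Finset.mem_univ, true_and]
        constructor
        · rintro ⟨hq1, hq2⟩
          by_cases hq : q ∈ A (S q.1 q.2) (m q.1 q.2)
          · rw [if_pos hq] at hq1
            exact absurd (hq1 ▸ Finset.mem_insert_self i (S q.1 q.2)) hiT
          · rw [if_neg hq] at hq1
            refine ⟨⟨hq1, hq2⟩, ?_⟩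
            rw [← hq1, ← hq2]
            exact hq
        · rintro ⟨⟨hq1, hq2⟩, hq3⟩
          have hq : q ∉ A (S q.1 q.2) (m q.1 q.2) := by rw [hq1, hq2]; exact hq3
          rw [if_neg hq]
          exact ⟨hq1, hq2⟩
      rw [key, Finset.card_sdiff_of_subset (hAsub T ℓ), hcount T hT' ℓ hℓ, hAcard' T hT' ℓ hℓ]
      split_ifs with h1 h2 h3
      · obtain ⟨a, ha⟩ : ∃ a, ℓ - T.card = a + 1 := ⟨ℓ - T.card - 1, by omega⟩
        have e1 : N - τ = (N - (τ+1)) + 1 := by omega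
        have e2 : ℓ - T.card - 1 = a := by omega
        rw [e2, ha, e1, Nat.choose_succ_succ]
        simp only [Nat.succ_eq_add_one]
        omega
      · have e2 : ℓ - T.card = 0 := by omega
        rw [e2]
        simp
      · omega
      · rfl
end

section
/- Let N be a positive integer. A type for ground-set size N is realizable if and only if it is admissible. -/
/-!
Realizable types are admissible because the sets of size `x` in a realization are distinct
subsets of `{1, …, N}`.

For the converse we induct on `N`, for a family of entries grouped into shapes, each entry
carrying a size and a label, where sets only need to be distinct within a label. To remove the
point `N`, choose the set `D` of entries whose set contains it: at most one entry per shape,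
one in every shape whose sizes add up to `N`, and, among the `a` entries of a given label and
size `x`, between `a - C(N-1, x)` and `C(N, x) - C(N-1, x)` of them. Decrementing the sizes in `D` and
refining each label by membership in `D` then gives an admissible family for `N - 1`.
Since `a ≤ C(N, x)`, selecting each entry with weight `size / N` is a fractional solution of
these constraints; an integral one comes from two applications of Hall's theorem (shapes into
class slots, mandatory class slots into shapes), merged by the Mendelsohn–Dulmage theorem.
-/

open Function Finset Relation

theorem mendelsohn_dulmage {L R ι : Type*} (adj : L → R → Prop) {f : L → R}
    (hf : Injective f) (hf_adj : ∀ l, adj l (f l)) {y : ι → R} {g : ι → L}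
    (hy : Injective y) (hg : Injective g) (hg_adj : ∀ i, adj (g i) (y i)) :
    ∃ M : L → R, Injective M ∧ (∀ l, adj l (M l)) ∧ Set.range y ⊆ Set.range M := by
  classical
  -- `C` collects the indices reachable from an index `i₀` with `y i₀` not matched by `f`
  -- along the alternating steps `i ↦ j`, `y j = f (g i)`; on `g '' C`, `f` is replaced by `y`.
  let C : Set ι := {i | ∃ i₀, y i₀ ∉ Set.range f ∧ ReflTransGen (fun i j => y j = f (g i)) i₀ i}
  have step : ∀ i ∈ C, ∀ j, y j = f (g i) → j ∈ C := fun i ⟨i₀, h₀, hi⟩ j hj =>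
    ⟨i₀, h₀, hi.tail hj⟩
  have mem_image_of_apply_eq : ∀ l, ∀ i ∈ C, f l = y i → l ∈ g '' C := by
    rintro l i ⟨i₀, h₀, hi⟩ hl
    rcases hi.cases_tail with rfl | ⟨i', hi', hi'i⟩
    · exact absurd ⟨l, hl⟩ h₀
    · exact ⟨i', ⟨i₀, h₀, hi'⟩, (hf (hl.trans hi'i)).symm⟩
  set M : L → R := fun l => if h : l ∈ g '' C then y h.choose else f l
  have M_of_mem : ∀ i ∈ C, M (g i) = y i := fun i hi => by
    have h : g i ∈ g '' C := Set.mem_image_of_mem g hi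
    simp only [M, h, dif_pos, hg h.choose_spec.2]
  refine ⟨M, fun l₁ l₂ h => ?_, fun l => ?_, ?_⟩
  · by_cases h₁ : l₁ ∈ g '' C <;> by_cases h₂ : l₂ ∈ g '' C
    · obtain ⟨i₁, hi₁, rfl⟩ := h₁
      obtain ⟨i₂, hi₂, rfl⟩ := h₂
      rw [M_of_mem i₁ hi₁, M_of_mem i₂ hi₂] at h
      rw [hy h]
    · obtain ⟨i₁, hi₁, rfl⟩ := h₁
      simp only [M_of_mem i₁ hi₁, M, h₂, dif_neg, not_false_eq_true] at h
      exact absurd (mem_image_of_apply_eq l₂ i₁ hi₁ h.symm) h₂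
    · obtain ⟨i₂, hi₂, rfl⟩ := h₂
      simp only [M_of_mem i₂ hi₂, M, h₁, dif_neg, not_false_eq_true] at h
      exact absurd (mem_image_of_apply_eq l₁ i₂ hi₂ h) h₁
    · simp only [M, h₁, h₂, dif_neg, not_false_eq_true] at h
      exact hf h
  · by_cases hl : l ∈ g '' C
    · obtain ⟨i, hi, rfl⟩ := hl
      rw [M_of_mem i hi]
      exact hg_adj i
    · simpa only [M, hl, dif_neg, not_false_eq_true] using hf_adj l
  · rintro _ ⟨i, rfl⟩
    by_cases hi : i ∈ C
    · exact ⟨g i, M_of_mem i hi⟩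
    · obtain ⟨l, hl⟩ : y i ∈ Set.range f := by
        by_contra hyf
        exact hi ⟨i, hyf, .refl⟩
      have hlC : l ∉ g '' C := by
        rintro ⟨j, hj, rfl⟩
        exact hi (step j hj i hl.symm)
      exact ⟨l, by simpa only [M, hlC, dif_neg, not_false_eq_true] using hl⟩

lemma exists_finset_representatives {E K C : Type*} [Fintype E] {shape : E → K}
    {cls : E → C} (σ : K → Option C)
    (hσ : ∀ γ c, σ γ = some c → ∃ e, shape e = γ ∧ cls e = c) :
    ∃ D : Finset E, Set.InjOn shape D ∧ (∀ e ∈ D, σ (shape e) = some (cls e)) ∧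
      ∀ γ c, σ γ = some c → ∃ e ∈ D, shape e = γ ∧ cls e = c := by
  classical
  have : ∀ γ, ∃ o : Option E, o.map cls = σ γ ∧ ∀ e ∈ o, shape e = γ := by
    intro γ
    cases h : σ γ with
    | none => exact ⟨none, rfl, by simp⟩
    | some c =>
      obtain ⟨e, he, hc⟩ := hσ γ c h
      exact ⟨some e, by simp [hc], by simp [he]⟩
  choose τ hτ_map hτ_shape using this
  refine ⟨({e | τ (shape e) = some e} : Finset E), fun e he e' he' h => ?_, fun e he => ?_,
    fun γ c h => ?_⟩
  · simp only [coe_filter, mem_univ, true_and] at he he'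
    exact Option.some_injective _ (he.symm.trans (h ▸ he'))
  · simp only [mem_filter, mem_univ, true_and] at he
    simpa [he] using (hτ_map (shape e)).symm
  · obtain ⟨e, he, rfl⟩ := Option.map_eq_some_iff.1 ((hτ_map γ).trans h)
    obtain rfl := hτ_shape γ e he
    exact ⟨e, by simpa using he, rfl, rfl⟩

section PartialTransversal

variable {E K C : Type*} [Fintype E] [DecidableEq K] [DecidableEq C]

lemma sum_fiber_le_sum_fiber_image {A B : Type*} [DecidableEq A] [DecidableEq B]
    (a : E → A) (b : E → B) (w : E → ℕ) (s : Finset A) :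
    ∑ x ∈ s, ∑ e with a e = x, w e ≤
      ∑ z ∈ ({e | a e ∈ s} : Finset E).image b, ∑ e with b e = z, w e := by
  rw [sum_fiberwise_eq_sum_filter, sum_fiberwise_eq_sum_filter]
  exact sum_le_sum_of_subset fun e he => by
    simp only [mem_filter, mem_univ, true_and, mem_image] at he ⊢
    exact ⟨e, he, rfl⟩

variable (shape : E → K) (cls : E → C) (w : E → ℕ) (d : ℕ) (hi : C → ℕ)

/-- Class `c` offers the slots `⟨c, i⟩`, `i < hi c`; a shape `γ` may use those of the classes of
its entries, and also a private dummy slot `inr γ` unless its weights add up to `d`. -/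
def availableSlots (γ : K) : Finset ((Σ _ : C, ℕ) ⊕ K) :=
  ((({e | shape e = γ} : Finset E).image cls).sigma fun c => range (hi c)).disjSum
    (if ∑ e with shape e = γ, w e = d then ∅ else {γ})

variable {shape cls w d hi}

lemma inl_mem_availableSlots {γ : K} {r : Σ _ : C, ℕ} :
    .inl r ∈ availableSlots shape cls w d hi γ ↔
      (∃ e, shape e = γ ∧ cls e = r.1) ∧ r.2 < hi r.1 := by
  simp [availableSlots]

lemma inr_mem_availableSlots {γ γ' : K} :
    .inr γ' ∈ availableSlots shape cls w d hi γ ↔ γ' = γ ∧ ∑ e with shape e = γ, w e ≠ d := by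
  by_cases h : ∑ e with shape e = γ, w e = d <;> simp [availableSlots, h]

lemma card_le_card_biUnion_availableSlots (hd : 0 < d)
    (hhi : ∀ c, ∑ e with cls e = c, w e ≤ d * hi c) (s : Finset K) :
    #s ≤ #(s.biUnion (availableSlots shape cls w d hi)) := by
  set full := {γ ∈ s | ∑ e with shape e = γ, w e = d}
  set T := ({e | shape e ∈ full} : Finset E).image cls
  have h_full : #full ≤ ∑ c ∈ T, hi c := by
    refine Nat.le_of_mul_le_mul_left ?_ hd
    calc d * #full = ∑ γ ∈ full, ∑ e with shape e = γ, w e := by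
          rw [sum_congr rfl fun γ hγ => (mem_filter.1 hγ).2, sum_const, smul_eq_mul, mul_comm]
      _ ≤ ∑ c ∈ T, ∑ e with cls e = c, w e := sum_fiber_le_sum_fiber_image shape cls w full
      _ ≤ ∑ c ∈ T, d * hi c := sum_le_sum fun c _ => hhi c
      _ = d * ∑ c ∈ T, hi c := (mul_sum _ _ _).symm
  have h_sub : (T.sigma fun c => range (hi c)).disjSum {γ ∈ s | ¬∑ e with shape e = γ, w e = d} ⊆
      s.biUnion (availableSlots shape cls w d hi) := by
    rintro (⟨c, i⟩ | γ) h
    · simp only [inl_mem_disjSum, mem_sigma, mem_image, mem_filter, mem_univ, true_and,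
        mem_range, T, full] at h
      obtain ⟨⟨e, ⟨he, -⟩, rfl⟩, hlt⟩ := h
      exact mem_biUnion.2 ⟨shape e, he, inl_mem_availableSlots.2 ⟨⟨e, rfl, rfl⟩, hlt⟩⟩
    · simp only [inr_mem_disjSum, mem_filter] at h
      exact mem_biUnion.2 ⟨γ, h.1, inr_mem_availableSlots.2 ⟨rfl, h.2⟩⟩
  calc #s = #full + #{γ ∈ s | ¬∑ e with shape e = γ, w e = d} :=
        (card_filter_add_card_filter_not _).symm
    _ ≤ ∑ c ∈ T, hi c + #{γ ∈ s | ¬∑ e with shape e = γ, w e = d} := by gcongr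
    _ = #((T.sigma fun c => range (hi c)).disjSum {γ ∈ s | ¬∑ e with shape e = γ, w e = d}) := by
        simp [card_disjSum, card_sigma]
    _ ≤ #(s.biUnion (availableSlots shape cls w d hi)) := card_le_card h_sub

lemma card_le_card_biUnion_image_shape {lo : C → ℕ} (hd : 0 < d)
    (hshape : ∀ γ, ∑ e with shape e = γ, w e ≤ d)
    (hlo : ∀ c, d * lo c ≤ ∑ e with cls e = c, w e)
    (t : Finset {r : Σ _ : C, ℕ // r.2 < lo r.1}) :
    #t ≤ #(t.biUnion fun r => ({e | cls e = r.1.1} : Finset E).image shape) := by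
  set T := t.image (·.1.1)
  set S := ({e | cls e ∈ T} : Finset E).image shape
  have h_slots : #t ≤ ∑ c ∈ T, lo c := by
    calc #t = #(t.map (Embedding.subtype _)) := (card_map _).symm
      _ ≤ #(T.sigma fun c => range (lo c)) := card_le_card fun r hr => by
          obtain ⟨r', hr', rfl⟩ := mem_map.1 hr
          exact mem_sigma.2 ⟨mem_image_of_mem _ hr', mem_range.2 r'.2⟩
      _ = ∑ c ∈ T, lo c := by simp [card_sigma]
  have h_shapes : ∑ c ∈ T, lo c ≤ #S := by
    refine Nat.le_of_mul_le_mul_left ?_ hd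
    calc d * ∑ c ∈ T, lo c = ∑ c ∈ T, d * lo c := mul_sum _ _ _
      _ ≤ ∑ c ∈ T, ∑ e with cls e = c, w e := sum_le_sum fun c _ => hlo c
      _ ≤ ∑ γ ∈ S, ∑ e with shape e = γ, w e := sum_fiber_le_sum_fiber_image cls shape w T
      _ ≤ ∑ γ ∈ S, d := sum_le_sum fun γ _ => hshape γ
      _ = d * #S := by rw [sum_const, smul_eq_mul, mul_comm]
  refine h_slots.trans (h_shapes.trans (card_le_card fun γ hγ => ?_))
  simp only [S, T, mem_image, mem_filter, mem_univ, true_and] at hγ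
  obtain ⟨e, ⟨r, hr, he⟩, rfl⟩ := hγ
  exact mem_biUnion.2 ⟨r, hr, mem_image.2 ⟨e, by simpa using he.symm, rfl⟩⟩

lemma exists_injective_mem_availableSlots {lo : C → ℕ} (hd : 0 < d)
    (hshape : ∀ γ, ∑ e with shape e = γ, w e ≤ d)
    (hlo : ∀ c, d * lo c ≤ ∑ e with cls e = c, w e)
    (hhi : ∀ c, ∑ e with cls e = c, w e ≤ d * hi c) :
    ∃ M : K → (Σ _ : C, ℕ) ⊕ K, Injective M ∧
      (∀ γ, M γ ∈ availableSlots shape cls w d hi γ) ∧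
      ∀ c i, i < lo c → .inl ⟨c, i⟩ ∈ Set.range M := by
  classical
  obtain ⟨f, hf, hf_mem⟩ := (all_card_le_biUnion_card_iff_exists_injective
    (availableSlots shape cls w d hi)).1 (card_le_card_biUnion_availableSlots hd hhi)
  obtain ⟨g, hg, hg_mem⟩ := (all_card_le_biUnion_card_iff_exists_injective
    fun r : {r : Σ _ : C, ℕ // r.2 < lo r.1} => ({e | cls e = r.1.1} : Finset E).image shape).1
    (card_le_card_biUnion_image_shape hd hshape hlo)
  have hlo_le_hi (c : C) : lo c ≤ hi c := Nat.le_of_mul_le_mul_left ((hlo c).trans (hhi c)) hd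
  obtain ⟨M, hM, hM_mem, hM_range⟩ := mendelsohn_dulmage
    (fun γ r => r ∈ availableSlots shape cls w d hi γ) hf hf_mem
    (y := fun r : {r : Σ _ : C, ℕ // r.2 < lo r.1} => Sum.inl r.1)
    (Sum.inl_injective.comp Subtype.val_injective) hg fun r => by
      obtain ⟨e, he, hge⟩ := mem_image.1 (hg_mem r)
      exact inl_mem_availableSlots.2 ⟨⟨e, hge, (mem_filter.1 he).2⟩, r.2.trans_le (hlo_le_hi _)⟩
  exact ⟨M, hM, hM_mem, fun c i hlt => hM_range ⟨⟨⟨c, i⟩, hlt⟩, rfl⟩⟩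

theorem exists_partial_transversal_of_weights {lo : C → ℕ} (hd : 0 < d)
    (hshape : ∀ γ, ∑ e with shape e = γ, w e ≤ d)
    (hlo : ∀ c, d * lo c ≤ ∑ e with cls e = c, w e)
    (hhi : ∀ c, ∑ e with cls e = c, w e ≤ d * hi c) :
    ∃ D : Finset E, Set.InjOn shape D ∧
      (∀ γ, ∑ e with shape e = γ, w e = d → ∃ e ∈ D, shape e = γ) ∧
      ∀ c, lo c ≤ #{e ∈ D | cls e = c} ∧ #{e ∈ D | cls e = c} ≤ hi c := by
  obtain ⟨M, hM, hM_mem, hM_cover⟩ := exists_injective_mem_availableSlots hd hshape hlo hhi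
  set σ : K → Option C := fun γ => Sum.elim (fun r => some r.1) (fun _ => none) (M γ)
  have hσ (γ : K) (c : C) : σ γ = some c ↔ ∃ i, M γ = .inl ⟨c, i⟩ := by
    rcases h : M γ with ⟨c', i⟩ | γ' <;> simp [σ, h, eq_comm]
  obtain ⟨D, hD_inj, hD_σ, hD_cover⟩ := exists_finset_representatives σ fun γ c h => by
    obtain ⟨i, hMγ⟩ := (hσ γ c).1 h
    exact (inl_mem_availableSlots.1 (hMγ ▸ hM_mem γ)).1
  refine ⟨D, hD_inj, fun γ hγ => ?_, fun c => ?_⟩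
  · rcases h : M γ with ⟨c, i⟩ | γ'
    · obtain ⟨e, he, rfl, -⟩ := hD_cover γ c ((hσ γ c).2 ⟨i, h⟩)
      exact ⟨e, he, rfl⟩
    · exact absurd hγ (inr_mem_availableSlots.1 (h ▸ hM_mem γ)).2
  set slot : ℕ → (Σ _ : C, ℕ) ⊕ K := fun i => .inl ⟨c, i⟩
  have h_slot : Injective slot := fun i j h => by simpa [slot] using h
  set P := {e ∈ D | cls e = c}.image fun e => M (shape e)
  have hP : #P = #{e ∈ D | cls e = c} := card_image_of_injOn fun e he e' he' h =>
    hD_inj (mem_filter.1 he).1 (mem_filter.1 he').1 (hM h)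
  have h_hi : P ⊆ (range (hi c)).image slot := by
    simp only [subset_iff, P, mem_image, mem_filter, mem_range]
    rintro _ ⟨e, ⟨he, rfl⟩, rfl⟩
    obtain ⟨i, hMe⟩ := (hσ _ _).1 (hD_σ e he)
    exact ⟨i, (inl_mem_availableSlots.1 (hMe ▸ hM_mem (shape e))).2, hMe.symm⟩
  have h_lo : (range (lo c)).image slot ⊆ P := by
    simp only [subset_iff, P, mem_image, mem_filter, mem_range]
    rintro _ ⟨i, hlt, rfl⟩
    obtain ⟨γ, hγ⟩ := hM_cover c i hlt
    obtain ⟨e, he, rfl, rfl⟩ := hD_cover γ c ((hσ γ c).2 ⟨i, hγ⟩)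
    exact ⟨e, ⟨he, rfl⟩, hγ⟩
  constructor
  · simpa [← hP, card_image_of_injective _ h_slot] using card_le_card h_lo
  · simpa [← hP, card_image_of_injective _ h_slot] using card_le_card h_hi

end PartialTransversal

lemma mul_choose_succ_eq (n x : ℕ) :
    x * (n + 1).choose x = (n + 1) * ((n + 1).choose x - n.choose x) := by
  cases x with
  | zero => simp
  | succ y =>
    have h : (n + 1).choose (y + 1) - n.choose (y + 1) = n.choose y := by
      rw [Nat.choose_succ_succ']; omega
    rw [h, Nat.add_one_mul_choose_eq, mul_comm]

lemma succ_mul_sub_choose_le {n x a : ℕ} (ha : a ≤ (n + 1).choose x) :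
    (n + 1) * (a - n.choose x) ≤ x * a := by
  rcases le_or_gt a (n.choose x) with h | h
  · simp [Nat.sub_eq_zero_of_le h]
  have key := Nat.choose_mul_succ_eq n x
  obtain ⟨m, hm⟩ : ∃ m, n + 1 - x = m := ⟨_, rfl⟩
  have hx : x ≤ n + 1 := by
    by_contra hx
    simp [Nat.choose_eq_zero_of_lt (not_le.1 hx)] at ha
    omega
  have hnm : (n + 1 : ℤ) = m + x := by omega
  rw [hm] at key
  zify [h.le] at key ha ⊢
  rw [hnm] at key ⊢
  nlinarith [mul_le_mul_of_nonneg_right ha (Int.natCast_nonneg m)]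

section LiftWithLast

variable {n : ℕ} (b : Prop) [Decidable b] (s : Finset (Fin n))

def liftWithLast : Finset (Fin (n + 1)) :=
  if b then insert (Fin.last n) (s.map Fin.castSuccEmb) else s.map Fin.castSuccEmb

variable {b s}

lemma last_notMem_map_castSuccEmb : Fin.last n ∉ s.map Fin.castSuccEmb := by
  simp [Fin.castSucc_ne_last]

@[simp] lemma last_mem_liftWithLast : Fin.last n ∈ liftWithLast b s ↔ b := by
  by_cases hb : b <;> simp [liftWithLast, hb, Fin.castSucc_ne_last]

@[simp] lemma castSucc_mem_liftWithLast {i : Fin n} :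
    i.castSucc ∈ liftWithLast b s ↔ i ∈ s := by
  by_cases hb : b <;> simp [liftWithLast, hb, (Fin.castSucc_ne_last i)]

lemma card_liftWithLast : #(liftWithLast b s) = #s + if b then 1 else 0 := by
  by_cases hb : b <;> simp [liftWithLast, hb, card_insert_of_notMem last_notMem_map_castSuccEmb]

lemma liftWithLast_inj {b' : Prop} [Decidable b'] {s' : Finset (Fin n)}
    (h : liftWithLast b s = liftWithLast b' s') : (b ↔ b') ∧ s = s' := by
  refine ⟨by simpa using congrArg (Fin.last n ∈ ·) h, ext fun i => ?_⟩
  simpa using congrArg (i.castSucc ∈ ·) h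

lemma disjoint_liftWithLast {b' : Prop} [Decidable b'] {s' : Finset (Fin n)}
    (hb : ¬(b ∧ b')) (hs : Disjoint s s') : Disjoint (liftWithLast b s) (liftWithLast b' s') := by
  rw [disjoint_left]
  intro i
  induction i using Fin.lastCases with
  | last => simpa using fun h h' => hb ⟨h, h'⟩
  | cast i => simpa using fun h => disjoint_left.1 hs h

end LiftWithLast

structure IsRealization {E K L α : Type*} (shape : E → K) (label : E → L) (size : E → ℕ)
    (T : E → Finset α) : Prop where
  card_eq : ∀ e, #(T e) = size e
  disjoint : ∀ e e', e ≠ e' → shape e = shape e' → Disjoint (T e) (T e')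
  ne : ∀ e e', e ≠ e' → label e = label e' → T e ≠ T e'

lemma IsRealization.liftWithLast {E K L : Type*} [DecidableEq E] {shape : E → K}
    {label : E → L} {size : E → ℕ} {n : ℕ} {D : Finset E} {T : E → Finset (Fin n)}
    (hT : IsRealization shape (fun e => (label e, decide (e ∈ D)))
      (fun e => size e - if e ∈ D then 1 else 0) T)
    (hD : Set.InjOn shape D) (hpos : ∀ e ∈ D, 0 < size e) :
    IsRealization shape label size fun e => liftWithLast (e ∈ D) (T e) where
  card_eq e := by
    rw [card_liftWithLast, hT.card_eq]
    split_ifs with he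
    · have := hpos e he
      omega
    · rfl
  disjoint e e' hne hsh :=
    disjoint_liftWithLast (fun h => hne (hD h.1 h.2 hsh)) (hT.disjoint e e' hne hsh)
  ne e e' hne hl heq := by
    obtain ⟨hD, hs⟩ := liftWithLast_inj heq
    exact hT.ne e e' hne (by simp [hl, hD]) hs

section Realization

variable {E K L : Type*} [Fintype E] [DecidableEq K] [DecidableEq L]
  {shape : E → K} {label : E → L} {size : E → ℕ} {n : ℕ} {D : Finset E}

lemma size_le_sum_shape (e : E) : size e ≤ ∑ e' with shape e' = shape e, size e' :=
  single_le_sum (fun _ _ => Nat.zero_le _) (by simp)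

lemma exists_isRealization_zero (hshape : ∀ γ, ∑ e with shape e = γ, size e ≤ 0)
    (hcount : ∀ ℓ x, #{e | label e = ℓ ∧ size e = x} ≤ Nat.choose 0 x) :
    ∃ T : E → Finset (Fin 0), IsRealization shape label size T := by
  classical
  have hsize (e : E) : size e = 0 := Nat.le_zero.1 ((size_le_sum_shape e).trans (hshape _))
  refine ⟨fun _ => ∅, fun e => by simp [hsize e], fun _ _ _ _ => disjoint_empty_left _,
    fun e e' hne hl _ => ?_⟩
  have h_pair : {e, e'} ⊆ ({x | label x = label e ∧ size x = 0} : Finset E) := by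
    simp [insert_subset_iff, hsize, hl]
  have := (card_le_card h_pair).trans (hcount (label e) 0)
  rw [card_pair hne, Nat.choose_zero_right] at this
  omega

lemma exists_split_finset (hshape : ∀ γ, ∑ e with shape e = γ, size e ≤ n + 1)
    (hcount : ∀ ℓ x, #{e | label e = ℓ ∧ size e = x} ≤ (n + 1).choose x) :
    ∃ D : Finset E, Set.InjOn shape D ∧
      (∀ γ, ∑ e with shape e = γ, size e = n + 1 → ∃ e ∈ D, shape e = γ) ∧
      ∀ ℓ x, #{e | label e = ℓ ∧ size e = x} - n.choose x ≤ #{e ∈ D | label e = ℓ ∧ size e = x} ∧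
        #{e ∈ D | label e = ℓ ∧ size e = x} ≤ (n + 1).choose x - n.choose x := by
  have hsum (c : L × ℕ) :
      ∑ e with (label e, size e) = c, size e = c.2 * #{e | label e = c.1 ∧ size e = c.2} := by
    rw [sum_congr rfl fun e he => congrArg Prod.snd (mem_filter.1 he).2, sum_const, smul_eq_mul,
      mul_comm]
    simp [Prod.ext_iff]
  obtain ⟨D, hD, hfull, hcard⟩ := exists_partial_transversal_of_weights
    (cls := fun e => (label e, size e)) n.succ_pos
    (lo := fun c => #{e | label e = c.1 ∧ size e = c.2} - n.choose c.2) hshape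
    (fun c => hsum c ▸ succ_mul_sub_choose_le (hcount _ _))
    (fun c => hsum c ▸ mul_choose_succ_eq n c.2 ▸ Nat.mul_le_mul_left _ (hcount _ _))
  exact ⟨D, hD, hfull, fun ℓ x => by simpa [Prod.ext_iff] using hcard (ℓ, x)⟩

lemma sum_shape_sub_indicator_le [DecidableEq E] (hD : Set.InjOn shape D)
    (hpos : ∀ e ∈ D, 0 < size e) (hshape : ∀ γ, ∑ e with shape e = γ, size e ≤ n + 1)
    (hfull : ∀ γ, ∑ e with shape e = γ, size e = n + 1 → ∃ e ∈ D, shape e = γ) (γ : K) :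
    ∑ e with shape e = γ, (size e - if e ∈ D then 1 else 0) ≤ n := by
  have h_one : #{e ∈ D | shape e = γ} ≤ 1 := card_le_one.2 fun e he e' he' =>
    hD (mem_filter.1 he).1 (mem_filter.1 he').1
      ((mem_filter.1 he).2.trans (mem_filter.1 he').2.symm)
  have h_split : ∑ e with shape e = γ, size e =
      ∑ e with shape e = γ, (size e - if e ∈ D then 1 else 0) + #{e ∈ D | shape e = γ} := by
    have : #{e ∈ D | shape e = γ} = ∑ e with shape e = γ, if e ∈ D then 1 else 0 := by
      rw [sum_boole]
      congr 1
      ext e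
      simp [and_comm]
    rw [this, ← sum_add_distrib]
    refine sum_congr rfl fun e _ => ?_
    split_ifs with he
    · have := hpos e he
      omega
    · rfl
  by_cases hγ : ∑ e with shape e = γ, size e = n + 1
  · obtain ⟨e, he, rfl⟩ := hfull _ hγ
    have : 0 < #{e' ∈ D | shape e' = shape e} := card_pos.2 ⟨e, mem_filter.2 ⟨he, rfl⟩⟩
    omega
  · have := hshape γ
    omega

lemma card_label_size_sub_indicator_le [DecidableEq E] (hpos : ∀ e ∈ D, 0 < size e)
    (hcard : ∀ ℓ x, #{e | label e = ℓ ∧ size e = x} - n.choose x ≤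
      #{e ∈ D | label e = ℓ ∧ size e = x} ∧
        #{e ∈ D | label e = ℓ ∧ size e = x} ≤ (n + 1).choose x - n.choose x)
    (c : L × Bool) (x : ℕ) :
    #{e | (label e, decide (e ∈ D)) = c ∧ (size e - if e ∈ D then 1 else 0) = x} ≤
      n.choose x := by
  obtain ⟨ℓ, b⟩ := c
  cases b with
  | false =>
    have h_out : #{e | (label e, decide (e ∈ D)) = (ℓ, false) ∧
        (size e - if e ∈ D then 1 else 0) = x} = #{e ∈ {e | label e = ℓ ∧ size e = x} | e ∉ D} := by
      congr 1
      ext e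
      by_cases he : e ∈ D <;> simp [he]
    have h_in : #{e ∈ {e | label e = ℓ ∧ size e = x} | e ∈ D} =
        #{e ∈ D | label e = ℓ ∧ size e = x} := by
      congr 1
      ext e
      simp [and_comm]
    have := card_filter_add_card_filter_not (s := {e | label e = ℓ ∧ size e = x}) (· ∈ D)
    have := (hcard ℓ x).1
    omega
  | true =>
    calc _ ≤ #{e ∈ D | label e = ℓ ∧ size e = x + 1} := card_le_card fun e he => by
          simp only [mem_filter, mem_univ, true_and, Prod.mk.injEq, decide_eq_true_eq] at he ⊢
          obtain ⟨⟨hl, he⟩, hs⟩ := he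
          simp only [he, if_true] at hs
          have := hpos e he
          exact ⟨he, hl, by omega⟩
      _ ≤ (n + 1).choose (x + 1) - n.choose (x + 1) := (hcard ℓ (x + 1)).2
      _ = n.choose x := by
          rw [Nat.choose_succ_succ']
          omega

theorem exists_isRealization [DecidableEq E] (n : ℕ)
    (hshape : ∀ γ, ∑ e with shape e = γ, size e ≤ n)
    (hcount : ∀ ℓ x, #{e | label e = ℓ ∧ size e = x} ≤ n.choose x) :
    ∃ T : E → Finset (Fin n), IsRealization shape label size T := by
  induction n generalizing L size with
  | zero => exact exists_isRealization_zero hshape hcount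
  | succ n ih =>
    obtain ⟨D, hD, hfull, hcard⟩ := exists_split_finset hshape hcount
    -- entries of size `0` are excluded from `D` since `C(n + 1, 0) - C(n, 0) = 0`
    have hpos : ∀ e ∈ D, 0 < size e := by
      intro e he
      have h_mem : e ∈ ({e' ∈ D | label e' = label e ∧ size e' = size e} : Finset E) := by
        simp [he]
      by_contra h
      have := (card_pos.2 ⟨e, h_mem⟩).trans_le (hcard (label e) (size e)).2
      simp [Nat.eq_zero_of_not_pos h] at this
    obtain ⟨T, hT⟩ := ih (label := fun e => (label e, decide (e ∈ D)))
      (size := fun e => size e - if e ∈ D then 1 else 0)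
      (sum_shape_sub_indicator_le hD hpos hshape hfull)
      (card_label_size_sub_indicator_le hpos hcard)
    exact ⟨_, hT.liftWithLast hD hpos⟩

end Realization

theorem Realizable.admissible {N k : ℕ} {p : Fin k → ℕ} {m : (γ : Fin k) → Fin (p γ) → ℕ}
    (h : Realizable N k p m) : Admissible N k p m := by
  obtain ⟨S, hcard, -, hS⟩ := h
  intro x _
  calc _ ≤ #((univ : Finset (Fin N)).powersetCard x) :=
        card_le_card_of_injOn (fun q => S q.1 q.2)
          (fun q hq => mem_powersetCard.2 ⟨subset_univ _, (hcard _ _).trans (mem_filter.1 hq).2⟩)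
          (fun q _ q' _ h => not_not.1 fun hne => hS q q' hne h)
    _ = N.choose x := by simp

theorem Admissible.realizable {N k : ℕ} {p : Fin k → ℕ} {m : (γ : Fin k) → Fin (p γ) → ℕ}
    (htype : IsType N k p m) (h : Admissible N k p m) : Realizable N k p m := by
  have hshape (γ : Fin k) : ∑ q : (γ : Fin k) × Fin (p γ) with q.1 = γ, m q.1 q.2 ≤ N := by
    rw [sum_filter, Fintype.sum_sigma]
    simpa using htype γ
  have hcount (ℓ : Unit) (x : ℕ) :
      #{q : (γ : Fin k) × Fin (p γ) | () = ℓ ∧ m q.1 q.2 = x} ≤ N.choose x := by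
    simp only [Subsingleton.elim () ℓ, true_and]
    rcases le_or_gt x N with hx | hx
    · exact h x hx
    · rw [Nat.choose_eq_zero_of_lt hx, Nat.le_zero, card_eq_zero, filter_eq_empty_iff]
      rintro q - rfl
      exact absurd ((size_le_sum_shape q).trans (hshape q.1)) hx.not_ge
  obtain ⟨T, hT⟩ := exists_isRealization N hshape hcount
  exact ⟨fun γ j => T ⟨γ, j⟩, fun γ j => hT.card_eq _,
    fun γ j j' hne => hT.disjoint _ _ (by simpa using hne) rfl, fun q q' hne => hT.ne q q' hne rfl⟩

theorem stmt6_general (N : ℕ)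
    (k : ℕ) (p : Fin k → ℕ) (m : (γ : Fin k) → Fin (p γ) → ℕ)
    (htype : IsType N k p m) :
    Realizable N k p m ↔ Admissible N k p m :=
  ⟨Realizable.admissible, Admissible.realizable htype⟩

/-- A type for ground-set size `N` is realizable if and only if it is admissible. -/
theorem stmt6 (N : ℕ) (hN : 0 < N)
    (k : ℕ) (p : Fin k → ℕ) (m : (γ : Fin k) → Fin (p γ) → ℕ)
    (htype : IsType N k p m) :
    Realizable N k p m ↔ Admissible N k p m :=
  stmt6_general N k p m htype
end

section
/- Let N and v be integers with 2 ≤ v ≤ N+1, let f = ⌊(N+1)/v⌋ and d = (f+1)v − N. Let 𝓜 be an admissible v-type for ground-set size N in which every shape is a multiset of v nonnegative integers summing to N. Then the number of shapes in 𝓜 (counted with multiplicity) satisfies |𝓜| ≤ Λ(N,v). -/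
/-- `Λ(N,v)` from the paper: with `f = ⌊(N+1)/v⌋` and `d = (f+1)v − N`,
`Λ(N,v) = ⌊(1/d)·Σ_{i=f−d+2}^{f} (f+1−i)·C(N,i)⌋ + Σ_{i=0}^{f−d+1} C(N,i)`,
where terms with negative index `i` vanish (here realized by the truncated
subtraction `f + 2 - d = max (f - d + 2) 0`, which is correct because
`C(N,i) = 0` for `i < 0`). -/
def Lam (N v : ℕ) : ℕ :=
  let f := (N + 1) / v
  let d := (f + 1) * v - N
  (∑ i ∈ Finset.Icc (f + 2 - d) f, (f + 1 - i) * N.choose i) / d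
    + ∑ i ∈ Finset.range (f + 2 - d), N.choose i

/-- Upper bound: if `2 ≤ v ≤ N+1` and `𝓜` is an admissible `v`-type for ground-set size
`N` whose `k` shapes (indexed by `Fin k`, with multiplicity) each consist of `v`
nonnegative integers summing to `N`, then `k ≤ Λ(N,v)`. -/
theorem stmt8 (N v : ℕ) (hv : 2 ≤ v) (hvN : v ≤ N + 1)
    (k : ℕ) (m : Fin k → Fin v → ℕ)
    (hsum : ∀ γ, ∑ j, m γ j = N)
    (hadm : ∀ x ≤ N,
      ((Finset.univ : Finset (Fin k × Fin v)).filter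
        (fun q => m q.1 q.2 = x)).card ≤ N.choose x) :
    k ≤ Lam N v := by
  show k ≤ ((∑ i ∈ Finset.Icc ((N+1)/v + 2 - (((N+1)/v + 1) * v - N)) ((N+1)/v),
        ((N+1)/v + 1 - i) * N.choose i) / (((N+1)/v + 1) * v - N)
      + ∑ i ∈ Finset.range ((N+1)/v + 2 - (((N+1)/v + 1) * v - N)), N.choose i)
  set f := (N + 1) / v with hf
  set d := (f + 1) * v - N with hdd
  have hmod : v * f + (N + 1) % v = N + 1 := by rw [hf]; exact Nat.div_add_mod _ _
  have hr : (N + 1) % v < v := Nat.mod_lt _ (by omega)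
  have hexp : (f + 1) * v = v * f + v := by ring
  have hd' : d = v * f + v - N := by rw [hdd, hexp]
  have h2f : 2 * f ≤ v * f := Nat.mul_le_mul_right f hv
  have hd2 : 2 ≤ d := by omega
  have hfN : f ≤ N := by omega
  set W : ℕ → ℕ := fun x => min d (f + 1 - x) with hW
  -- per-shape weight bound
  have hshape : ∀ γ : Fin k, d ≤ ∑ j, W (m γ j) := by
    intro γ
    by_cases h : ∃ j, m γ j + d ≤ f + 1
    · obtain ⟨j, hj⟩ := h
      have h1 : W (m γ j) = d := by simp only [hW]; omega
      calc d = W (m γ j) := h1.symm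
        _ ≤ ∑ j, W (m γ j) :=
          Finset.single_le_sum (f := fun j => W (m γ j))
            (fun i _ => Nat.zero_le _) (Finset.mem_univ j)
    · push_neg at h
      have heq : ∀ j : Fin v, W (m γ j) = f + 1 - m γ j := by
        intro j; have := h j; simp only [hW]; omega
      have key : (f + 1) * v ≤ (∑ j, (f + 1 - m γ j)) + ∑ j, m γ j := by
        rw [← Finset.sum_add_distrib]
        calc (f + 1) * v = ∑ _j : Fin v, (f + 1) := by
              simp [Finset.sum_const, mul_comm]
          _ ≤ ∑ j, (f + 1 - m γ j + m γ j) :=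
              Finset.sum_le_sum fun j _ => by omega
      rw [Finset.sum_congr rfl fun j _ => heq j]
      have hs := hsum γ
      omega
  -- total weight lower bound
  have hT : k * d ≤ ∑ q : Fin k × Fin v, W (m q.1 q.2) := by
    rw [Fintype.sum_prod_type]
    calc k * d = ∑ _γ : Fin k, d := by simp [mul_comm]
      _ ≤ ∑ γ : Fin k, ∑ j, W (m γ j) := Finset.sum_le_sum fun γ _ => hshape γ
  -- fiberwise rewriting
  have hmaps : ∀ q ∈ (Finset.univ : Finset (Fin k × Fin v)),
      m q.1 q.2 ∈ Finset.range (N + 1) := by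
    intro q _
    have : m q.1 q.2 ≤ ∑ j, m q.1 j :=
      Finset.single_le_sum (fun i _ => Nat.zero_le _) (Finset.mem_univ q.2)
    rw [Finset.mem_range]; have := hsum q.1; omega
  have hfib : ∑ q : Fin k × Fin v, W (m q.1 q.2)
      = ∑ x ∈ Finset.range (N + 1), W x *
          ((Finset.univ : Finset (Fin k × Fin v)).filter
            (fun q => m q.1 q.2 = x)).card := by
    rw [← Finset.sum_fiberwise_of_maps_to hmaps (fun q => W (m q.1 q.2))]
    refine Finset.sum_congr rfl fun x _ => ?_
    rw [Finset.sum_congr rfl (fun q hq => ?_), Finset.sum_const, smul_eq_mul, mul_comm]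
    simp only [Finset.mem_filter] at hq
    rw [hq.2]
  have hbound : ∑ q : Fin k × Fin v, W (m q.1 q.2)
      ≤ ∑ x ∈ Finset.range (N + 1), W x * N.choose x := by
    rw [hfib]
    exact Finset.sum_le_sum fun x hx =>
      Nat.mul_le_mul_left _ (hadm x (by simpa [Nat.lt_succ_iff] using hx))
  -- evaluate the weighted sum
  have hsplit : ∑ x ∈ Finset.range (N + 1), W x * N.choose x
      = (∑ i ∈ Finset.Icc (f + 2 - d) f, (f + 1 - i) * N.choose i)
        + d * ∑ i ∈ Finset.range (f + 2 - d), N.choose i := by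
    have h1 : ∑ x ∈ Finset.range (N + 1), W x * N.choose x
        = ∑ x ∈ Finset.range (f + 1), W x * N.choose x := by
      symm
      refine Finset.sum_subset (by intro x hx; simp only [Finset.mem_range] at *; omega) ?_
      intro x _ hx
      simp only [Finset.mem_range, not_lt] at hx
      have : W x = 0 := by simp only [hW]; omega
      simp [this]
    rw [h1, Finset.range_eq_Ico,
      ← Finset.sum_Ico_consecutive _ (Nat.zero_le (f + 2 - d)) (by omega : f + 2 - d ≤ f + 1),
      ← Finset.range_eq_Ico]
    have h2 : ∑ x ∈ Finset.range (f + 2 - d), W x * N.choose x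
        = d * ∑ i ∈ Finset.range (f + 2 - d), N.choose i := by
      rw [Finset.mul_sum]
      refine Finset.sum_congr rfl fun x hx => ?_
      simp only [Finset.mem_range] at hx
      have : W x = d := by simp only [hW]; omega
      rw [this]
    have h3 : ∑ x ∈ Finset.Ico (f + 2 - d) (f + 1), W x * N.choose x
        = ∑ i ∈ Finset.Icc (f + 2 - d) f, (f + 1 - i) * N.choose i := by
      rw [← Finset.Ico_add_one_right_eq_Icc]
      refine Finset.sum_congr rfl fun x hx => ?_
      simp only [Finset.mem_Ico] at hx
      have : W x = f + 1 - x := by simp only [hW]; omega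
      rw [this]
    rw [h2, h3]; ring
  have hk : k * d ≤ (∑ i ∈ Finset.Icc (f + 2 - d) f, (f + 1 - i) * N.choose i)
      + d * ∑ i ∈ Finset.range (f + 2 - d), N.choose i := by
    calc k * d ≤ _ := hT
      _ ≤ _ := hbound
      _ = _ := hsplit
  have hfin : k ≤ ((∑ i ∈ Finset.Icc (f + 2 - d) f, (f + 1 - i) * N.choose i)
      + d * ∑ i ∈ Finset.range (f + 2 - d), N.choose i) / d :=
    (Nat.le_div_iff_mul_le (by omega : 0 < d)).mpr hk
  rwa [Nat.add_mul_div_left _ _ (by omega : 0 < d)] at hfin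
end

section
/- Let N and v be integers with 2 ≤ v ≤ N+1, let f = ⌊(N+1)/v⌋ and d = (f+1)v − N, and let s = Σ_{i=f−d+2}^{f−1} (d−f−1+i)·C(N,i) and s' = Σ_{i=f−v+1}^{f−2} (v−f+i)·C(N,i), with C(N,i) = 0 for i < 0. If N ≢ v−1 (mod v), then Σ_{i=0}^{f−1} C(N,i) + ⌊(C(N,f) − s)/d⌋ = Λ(N,v). If N ≡ v−1 (mod v), then Σ_{i=0}^{f−2} C(N,i) + C(N,f−1) − ⌈s'/(v+1)⌉ = Λ(N,v). (In particular the constructed type 𝓛(N,v) has exactly Λ(N,v) shapes.) -/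
/-- `C(N,i)` for an integer index `i`, with the convention `C(N,i) = 0` for `i < 0`. -/
def chooseZ (N : ℕ) (i : ℤ) : ℤ := if 0 ≤ i then (N.choose i.toNat : ℤ) else 0

/-!
Writing the weight `f + 1 - i` in the numerator of `Λ(N,v)` as `d - (d - f - 1 + i)` turns
that numerator into `C(N,f) - s` plus `d` times a block of binomial coefficients; the block
passes through the floor division and joins the tail sum of `Λ`, which gives the first formula
whenever `d ≥ 2`, i.e. always. If `N ≡ v - 1 (mod v)`, then `f v = N + 1` and `d = v + 1`, so
`C(N,f) = (v - 1) C(N,f-1)` cancels the top term of `s`, leaving `⌊-s'/(v+1)⌋ = -⌈s'/(v+1)⌉`.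
-/

open Finset

section IntervalSums

variable {M : Type*} [AddCommMonoid M] {g : ℤ → M}

lemma sum_Icc_eq_add_sum_Icc_sub_one {a b : ℤ} (h : a ≤ b) :
    ∑ i ∈ Icc a b, g i = g b + ∑ i ∈ Icc a (b - 1), g i := by
  rw [← insert_Icc_sub_one_right_eq_Icc h, sum_insert (by simp)]

lemma sum_Icc_eq_sum_Icc_zero (hg : ∀ i < 0, g i = 0) {m : ℤ} (hm : m ≤ 0) (b : ℤ) :
    ∑ i ∈ Icc m b, g i = ∑ i ∈ Icc 0 b, g i :=
  (sum_subset (Icc_subset_Icc_left hm) fun i hi hi0 => hg i (by rw [mem_Icc] at hi hi0; omega)).symm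

lemma sum_Icc_zero_add_sum_Icc (hg : ∀ i < 0, g i = 0) {a b : ℤ} (h : a ≤ b + 1) :
    ∑ i ∈ Icc 0 (a - 1), g i + ∑ i ∈ Icc a b, g i = ∑ i ∈ Icc 0 b, g i := by
  rw [← sum_Icc_eq_sum_Icc_zero hg (min_le_left 0 a),
    ← sum_Icc_eq_sum_Icc_zero hg (min_le_left 0 a),
    ← sum_union (disjoint_left.2 fun i hi hi' => by rw [mem_Icc] at hi hi'; omega)]
  congr 1
  ext i
  simp only [mem_union, mem_Icc]
  omega

end IntervalSums

lemma linear_weight_sum_ediv_add_sum {g : ℤ → ℤ} (hg : ∀ i < 0, g i = 0) (f : ℤ) {d : ℤ}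
    (hd : 2 ≤ d) :
    (∑ i ∈ Icc (f - d + 2) f, (f + 1 - i) * g i) / d + ∑ i ∈ Icc 0 (f - d + 1), g i
      = ∑ i ∈ Icc 0 (f - 1), g i
        + (g f - ∑ i ∈ Icc (f - d + 2) (f - 1), (d - f - 1 + i) * g i) / d := by
  have hweights : ∑ i ∈ Icc (f - d + 2) f, (f + 1 - i) * g i
      = (g f - ∑ i ∈ Icc (f - d + 2) (f - 1), (d - f - 1 + i) * g i)
        + d * ∑ i ∈ Icc (f - d + 2) (f - 1), g i := by
    have hsplit : ∑ i ∈ Icc (f - d + 2) (f - 1), (f + 1 - i) * g i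
        = ∑ i ∈ Icc (f - d + 2) (f - 1), d * g i
          - ∑ i ∈ Icc (f - d + 2) (f - 1), (d - f - 1 + i) * g i := by
      rw [← sum_sub_distrib]
      exact sum_congr rfl fun i _ => by ring
    rw [sum_Icc_eq_add_sum_Icc_sub_one (by omega), hsplit, mul_sum]
    ring
  rw [hweights, Int.add_mul_ediv_left _ _ (by omega),
    ← sum_Icc_zero_add_sum_Icc hg (show f - d + 2 ≤ f - 1 + 1 by omega),
    show f - d + 2 - 1 = f - d + 1 by ring]
  ring

lemma Nat.choose_succ_eq_choose_mul_of_succ_mul_eq {N k w : ℕ} (h : (k + 1) * (w + 1) = N + 1) :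
    N.choose (k + 1) = N.choose k * w := by
  have hNk : N - k = (k + 1) * w := by rw [mul_add, mul_one] at h; omega
  apply Nat.eq_of_mul_eq_mul_right (show 0 < k + 1 by omega)
  rw [Nat.choose_succ_right_eq, hNk]
  ring

lemma chooseZ_natCast (N n : ℕ) : chooseZ N n = N.choose n := by
  simp [chooseZ]

lemma chooseZ_neg (N : ℕ) : ∀ i < 0, chooseZ N i = 0 := by
  intro i hi
  simp [chooseZ, not_le.mpr hi]

lemma chooseZ_eq_mul_chooseZ_sub_one {N : ℕ} {f v : ℤ} (hv : 0 < v) (h : f * v = N + 1) :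
    chooseZ N f = (v - 1) * chooseZ N (f - 1) := by
  have hf : 0 < f := pos_of_mul_pos_left (by omega) hv.le
  obtain ⟨k, rfl⟩ : ∃ k : ℕ, f = k + 1 := ⟨(f - 1).toNat, by omega⟩
  obtain ⟨w, rfl⟩ : ∃ w : ℕ, v = w + 1 := ⟨(v - 1).toNat, by omega⟩
  have h' : (k + 1) * (w + 1) = N + 1 := by exact_mod_cast h
  rw [add_sub_cancel_right, add_sub_cancel_right, ← Nat.cast_succ, chooseZ_natCast,
    chooseZ_natCast, Nat.choose_succ_eq_choose_mul_of_succ_mul_eq h']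
  push_cast
  ring

lemma Int.neg_ediv_add_one {m : ℤ} (hm : 0 ≤ m) (a : ℤ) :
    -a / (m + 1) = -((a + m) / (m + 1)) := by
  have hlo := Int.ediv_mul_le (a + m) (show m + 1 ≠ 0 by omega)
  have hhi := Int.lt_ediv_add_one_mul_self (a + m) (show 0 < m + 1 by omega)
  exact ((Int.ediv_emod_unique (r := (a + m) / (m + 1) * (m + 1) - a) (by omega)).2
    ⟨by ring, by linarith, by linarith⟩).1

theorem stmt9_general (N v : ℕ) (hv : 2 ≤ v) :
    ∀ f d s s' Λ : ℤ,
      f = ((N : ℤ) + 1) / (v : ℤ) →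
      d = (f + 1) * (v : ℤ) - (N : ℤ) →
      s = ∑ i ∈ Finset.Icc (f - d + 2) (f - 1), (d - f - 1 + i) * chooseZ N i →
      s' = ∑ i ∈ Finset.Icc (f - (v : ℤ) + 1) (f - 2), ((v : ℤ) - f + i) * chooseZ N i →
      Λ = (∑ i ∈ Finset.Icc (f - d + 2) f, (f + 1 - i) * chooseZ N i) / d
            + ∑ i ∈ Finset.Icc 0 (f - d + 1), chooseZ N i →
      (((N : ℤ) % (v : ℤ) ≠ (v : ℤ) - 1 →
          (∑ i ∈ Finset.Icc 0 (f - 1), chooseZ N i) + (chooseZ N f - s) / d = Λ) ∧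
        ((N : ℤ) % (v : ℤ) = (v : ℤ) - 1 →
          (∑ i ∈ Finset.Icc 0 (f - 2), chooseZ N i) + chooseZ N (f - 1)
            - (s' + (v : ℤ)) / ((v : ℤ) + 1) = Λ)) := by
  intro f d s s' Λ hf hd hs hs' hΛ
  have hv0 : (0 : ℤ) < v := by omega
  have hd2 : 2 ≤ d := by
    have := Int.lt_ediv_add_one_mul_self ((N : ℤ) + 1) hv0
    rw [← hf] at this
    linarith
  have hΛ' : Λ = ∑ i ∈ Icc 0 (f - 1), chooseZ N i + (chooseZ N f - s) / d := by
    rw [hΛ, hs, linear_weight_sum_ediv_add_sum (chooseZ_neg N) f hd2]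
  refine ⟨fun _ => hΛ'.symm, fun hmod => ?_⟩
  have hfv : f * v = N + 1 := by
    rw [hf]
    exact Int.ediv_mul_cancel ⟨N / v + 1, by linarith [Int.emod_add_mul_ediv (N : ℤ) v]⟩
  have hf1 : 1 ≤ f := pos_of_mul_pos_left (by omega) hv0.le
  have hdv : d = v + 1 := by rw [hd]; linarith
  have hss' : s = s' + (v - 1) * chooseZ N (f - 1) := by
    rw [hs, hs', hdv, show f - (v + 1) + 2 = f - v + 1 by ring,
      sum_Icc_eq_add_sum_Icc_sub_one (by omega : f - v + 1 ≤ f - 1),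
      show f - 1 - 1 = f - 2 by ring]
    rw [add_comm]
    congr 1
    · exact sum_congr rfl fun i _ => by ring
    · ring
  rw [hΛ', hss', chooseZ_eq_mul_chooseZ_sub_one hv0 hfv, hdv,
    show (v - 1) * chooseZ N (f - 1) - (s' + (v - 1) * chooseZ N (f - 1)) = -s' by ring,
    Int.neg_ediv_add_one hv0.le, sum_Icc_eq_add_sum_Icc_sub_one (by omega : 0 ≤ f - 1),
    show f - 1 - 1 = f - 2 by ring]
  ring

/-- The constructed type `𝓛(N,v)` has exactly `Λ(N,v)` shapes: with `f = ⌊(N+1)/v⌋`,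
`d = (f+1)v − N`, `s = Σ_{i=f−d+2}^{f−1} (d−f−1+i)·C(N,i)` and
`s' = Σ_{i=f−v+1}^{f−2} (v−f+i)·C(N,i)` (where `C(N,i) = 0` for `i < 0`):
if `N ≢ v−1 (mod v)` then `Σ_{i=0}^{f−1} C(N,i) + ⌊(C(N,f) − s)/d⌋ = Λ(N,v)`, and
if `N ≡ v−1 (mod v)` then `Σ_{i=0}^{f−2} C(N,i) + C(N,f−1) − ⌈s'/(v+1)⌉ = Λ(N,v)`.
(Division `/` on `ℤ` by the positive numbers `d` and `v+1` is floor division, and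
`(s' + v)/(v+1) = ⌈s'/(v+1)⌉`.) -/
theorem stmt9 (N v : ℕ) (hv : 2 ≤ v) (hvN : v ≤ N + 1) :
    ∀ f d s s' Λ : ℤ,
      f = ((N : ℤ) + 1) / (v : ℤ) →
      d = (f + 1) * (v : ℤ) - (N : ℤ) →
      s = ∑ i ∈ Finset.Icc (f - d + 2) (f - 1), (d - f - 1 + i) * chooseZ N i →
      s' = ∑ i ∈ Finset.Icc (f - (v : ℤ) + 1) (f - 2), ((v : ℤ) - f + i) * chooseZ N i →
      Λ = (∑ i ∈ Finset.Icc (f - d + 2) f, (f + 1 - i) * chooseZ N i) / d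
            + ∑ i ∈ Finset.Icc 0 (f - d + 1), chooseZ N i →
      (((N : ℤ) % (v : ℤ) ≠ (v : ℤ) - 1 →
          (∑ i ∈ Finset.Icc 0 (f - 1), chooseZ N i) + (chooseZ N f - s) / d = Λ) ∧
        ((N : ℤ) % (v : ℤ) = (v : ℤ) - 1 →
          (∑ i ∈ Finset.Icc 0 (f - 2), chooseZ N i) + chooseZ N (f - 1)
            - (s' + (v : ℤ)) / ((v : ℤ) + 1) = Λ)) :=
  stmt9_general N v hv
end

section
/- Let N and v be integers with 3 ≤ v < N and let a be an integer with 1 ≤ a ≤ N/v. Then (v−2) · Σ_{i=0}^{a−1} C(N,i) < C(N,a), where C denotes the binomial coefficient. -/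
/-- For `3 ≤ v < N` and `1 ≤ a ≤ N/v`: `(v−2)·Σ_{i=0}^{a−1} C(N,i) < C(N,a)`
(the inequality `Σ_{i=0}^{a−1} C(N,i) < (1/(v−2))·C(N,a)` with the denominator
cleared). -/
theorem stmt12 (N v a : ℕ) (hv : 3 ≤ v) (hvN : v < N) (ha1 : 1 ≤ a) (ha : a * v ≤ N) :
    (v - 2) * ∑ i ∈ Finset.range a, N.choose i < N.choose a := by
  induction a with
  | zero => omega
  | succ n ih =>
    rcases Nat.eq_zero_or_pos n with h0 | hpos
    · subst h0
      simp [Nat.choose_one_right]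
      omega
    · have hnv : n * v ≤ N := le_trans (by nlinarith) ha
      have ih' := ih hpos hnv
      rw [Finset.sum_range_succ, Nat.mul_add]
      have hle : (v - 1) * (n + 1) ≤ N - n := by
        have hx : (v - 1) * (n + 1) = v * (n + 1) - (n + 1) := by
          rw [Nat.sub_mul, one_mul]
        have hy : (n + 1) * v ≤ N := ha
        have hz : v * (n + 1) = (n + 1) * v := Nat.mul_comm _ _
        omega
      have key : (v - 1) * N.choose n ≤ N.choose (n + 1) := by
        have hch : N.choose (n+1) * (n+1) = N.choose n * (N - n) :=
          Nat.choose_succ_right_eq N n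
        have : (v - 1) * N.choose n * (n + 1) ≤ N.choose (n + 1) * (n + 1) := by
          rw [hch]
          calc (v - 1) * N.choose n * (n + 1)
              = ((v - 1) * (n + 1)) * N.choose n := by ring
            _ ≤ (N - n) * N.choose n := Nat.mul_le_mul_right _ hle
            _ = N.choose n * (N - n) := Nat.mul_comm _ _
        exact Nat.le_of_mul_le_mul_right this (Nat.succ_pos n)
      have hsplit : (v - 2) * N.choose n + N.choose n = (v - 1) * N.choose n := by
        have : v - 1 = (v - 2) + 1 := by omega
        rw [this, Nat.add_mul, one_mul]
      calc (v - 2) * ∑ i ∈ Finset.range n, N.choose i + (v - 2) * N.choose n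
          < N.choose n + (v - 2) * N.choose n := by omega
        _ = (v - 1) * N.choose n := by omega
        _ ≤ N.choose (n + 1) := key
end

section
/- Let N and v be integers with 3 ≤ v < N, and let a = ⌊N/v⌋. Then (v−1) · Σ_{i=0}^{a−1} C(N,i) < C(N, a+2), where C denotes the binomial coefficient. -/
-- sum bound: Σ_{i<a+1} C(N,i) < 2 C(N,a) when 3a ≤ N+1
lemma sum_lt (N : ℕ) : ∀ a, 3*a ≤ N+1 → ∑ i ∈ Finset.range (a+1), N.choose i < 2 * N.choose a := by
  intro a
  induction a with
  | zero => simp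
  | succ b ih =>
    intro h
    rw [Finset.sum_range_succ]
    have h1 : ∑ i ∈ Finset.range (b+1), N.choose i < 2 * N.choose b := ih (by omega)
    have h2 : 2 * N.choose b ≤ N.choose (b+1) := by
      have := Nat.choose_succ_right_eq N b
      -- N.choose (b+1) * (b+1) = N.choose b * (N - b)
      have hb : 2*(b+1) ≤ N - b := by omega
      have : 2 * N.choose b * (b+1) ≤ N.choose (b+1) * (b+1) := by
        rw [this]
        calc 2 * N.choose b * (b+1) = N.choose b * (2*(b+1)) := by ring
        _ ≤ N.choose b * (N-b) := Nat.mul_le_mul_left _ hb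
      exact Nat.le_of_mul_le_mul_right this (by omega)
    omega

-- identity
lemma chid (N b : ℕ) :
    N.choose (b+3) * ((b+1)*(b+2)*(b+3)) = N.choose b * ((N-b)*(N-b-1)*(N-b-2)) := by
  have h1 := Nat.choose_succ_right_eq N b
  have h2 := Nat.choose_succ_right_eq N (b+1)
  have h3 := Nat.choose_succ_right_eq N (b+2)
  calc N.choose (b+3) * ((b+1)*(b+2)*(b+3))
      = (N.choose (b+3) * (b+3)) * (b+1) * (b+2) := by ring
    _ = (N.choose (b+2) * (b+2)) * (b+1) * (N-(b+2)) := by rw [h3]; ring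
    _ = (N.choose (b+1) * (b+1)) * (N-(b+1)) * (N-(b+2)) := by rw [h2]; ring
    _ = N.choose b * ((N-b)*(N-b-1)*(N-b-2)) := by
        have e1 : N-(b+1) = N-b-1 := by omega
        have e2 : N-(b+2) = N-b-2 := by omega
        rw [h1, e1, e2]
        ring



lemma helper (w m c K : ℕ) (h1 : w*c ≤ m+1) (h2 : K ≤ c*((m+2)*m)) (hc : 0 < c) :
    K*w ≤ (m+2)*(m+1)*m := by
  have h : (K*w)*c ≤ ((m+2)*(m+1)*m)*c := by
    calc (K*w)*c = K*(w*c) := by ring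
    _ ≤ K*(m+1) := Nat.mul_le_mul_left _ h1
    _ ≤ (c*((m+2)*m))*(m+1) := Nat.mul_le_mul_right _ h2
    _ = ((m+2)*(m+1)*m)*c := by ring
  exact Nat.le_of_mul_le_mul_right h hc

set_option maxHeartbeats 1000000 in
lemma poly (N v b : ℕ) (hv : 3 ≤ v) (hvN : v < N) (hN : 10 ≤ N) (hva : v*(b+1) ≤ N) :
    2*(v-1)*((b+1)*(b+2)*(b+3)) ≤ (N-b)*(N-b-1)*(N-b-2) := by
  obtain ⟨w, rfl⟩ : ∃ w, v = w+1 := ⟨v-1, by omega⟩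
  have hw2 : 2 ≤ w := by omega
  have h3 : 3*(b+1) ≤ (w+1)*(b+1) := Nat.mul_le_mul_right _ (by omega)
  obtain ⟨m, hm⟩ : ∃ m, N - b = m + 2 := ⟨N-b-2, by omega⟩
  have e1 : N - b - 1 = m + 1 := by omega
  have e2 : N - b - 2 = m := by omega
  have eN : N = m + b + 2 := by omega
  rw [hm]
  have e3 : m+2-1 = m+1 := by omega
  have e4 : m+2-2 = m := by omega
  have e5 : w+1-1 = w := by omega
  rw [e3, e4, e5]
  have hkey : w*(b+1) ≤ m+1 := by
    have h : (w+1)*(b+1) = w*(b+1) + (b+1) := by ring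
    omega
  rcases Nat.lt_or_ge b 3 with hb | hb
  · interval_cases b
    · calc 2*w*((0+1)*(0+2)*(0+3)) = 12*w := by ring
      _ ≤ (m+2)*(m+1)*m := helper w m 1 12 (by omega)
          (by have := Nat.mul_le_mul (show 10 ≤ m+2 by omega) (show 8 ≤ m by omega); omega)
          one_pos
    · calc 2*w*((1+1)*(1+2)*(1+3)) = 48*w := by ring
      _ ≤ (m+2)*(m+1)*m := helper w m 2 48 (by omega)
          (by have := Nat.mul_le_mul (show 9 ≤ m+2 by omega) (show 7 ≤ m by omega); omega)
          (by norm_num)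
    · calc 2*w*((2+1)*(2+2)*(2+3)) = 120*w := by ring
      _ ≤ (m+2)*(m+1)*m := helper w m 3 120 (by omega)
          (by have := Nat.mul_le_mul (show 8 ≤ m+2 by omega) (show 6 ≤ m by omega); omega)
          (by norm_num)
  · -- b ≥ 3
    zify at hkey hw2 hb ⊢
    have hm0 : (0:ℤ) ≤ (m:ℤ) := Int.ofNat_nonneg m
    have hb0 : (0:ℤ) ≤ (b:ℤ) := Int.ofNat_nonneg b
    have hw0 : (0:ℤ) ≤ (w:ℤ) := Int.ofNat_nonneg w
    have hp0 : (0:ℤ) ≤ (w:ℤ)*((b:ℤ)+1) := by positivity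
    have c1 : 4*((b:ℤ)+1)^2 ≤ (w:ℤ)^2*((b:ℤ)+1)^2 := by
      have h1 : (0:ℤ) ≤ ((w:ℤ)-2)*((w:ℤ)+2) := mul_nonneg (by linarith) (by linarith)
      nlinarith [mul_nonneg h1 (sq_nonneg ((b:ℤ)+1))]
    have c2 : 2*((b:ℤ)+2)*((b:ℤ)+3) + 1 ≤ 4*((b:ℤ)+1)^2 := by
      have h2 : (0:ℤ) ≤ ((b:ℤ)-3)*(b:ℤ) := mul_nonneg (by linarith) hb0
      nlinarith [h2]
    have C : 2*((b:ℤ)+2)*((b:ℤ)+3) + 1 ≤ (w:ℤ)^2*((b:ℤ)+1)^2 := le_trans c2 c1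
    have B0 := mul_le_mul_of_nonneg_left C hp0
    have eB1 : (w:ℤ)*((b:ℤ)+1)*(2*((b:ℤ)+2)*((b:ℤ)+3)+1)
        = 2*(w:ℤ)*(((b:ℤ)+1)*((b:ℤ)+2)*((b:ℤ)+3)) + (w:ℤ)*((b:ℤ)+1) := by ring
    have eB2 : (w:ℤ)*((b:ℤ)+1)*((w:ℤ)^2*((b:ℤ)+1)^2) = ((w:ℤ)*((b:ℤ)+1))^3 := by ring
    have f1 : (0:ℤ) ≤ ((m:ℤ)+1) - (w:ℤ)*((b:ℤ)+1) := by linarith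
    have hsq : (1:ℤ) ≤ ((m:ℤ)+1)^2 := by nlinarith [hm0]
    have f2 : (0:ℤ) ≤ ((m:ℤ)+1)^2 + ((m:ℤ)+1)*((w:ℤ)*((b:ℤ)+1)) + ((w:ℤ)*((b:ℤ)+1))^2 - 1 := by
      nlinarith [hsq, mul_nonneg (show (0:ℤ) ≤ (m:ℤ)+1 by linarith) hp0, sq_nonneg ((w:ℤ)*((b:ℤ)+1))]
    have A0 := mul_nonneg f1 f2
    have eA : (((m:ℤ)+1) - (w:ℤ)*((b:ℤ)+1))*(((m:ℤ)+1)^2 + ((m:ℤ)+1)*((w:ℤ)*((b:ℤ)+1)) + ((w:ℤ)*((b:ℤ)+1))^2 - 1)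
        = (((m:ℤ)+1)^3 - ((m:ℤ)+1)) - (((w:ℤ)*((b:ℤ)+1))^3 - (w:ℤ)*((b:ℤ)+1)) := by ring
    have eG : ((m:ℤ)+2)*((m:ℤ)+1)*(m:ℤ) = ((m:ℤ)+1)^3 - ((m:ℤ)+1) := by ring
    rw [eB1, eB2] at B0
    rw [eA] at A0
    linarith [B0, A0]

/-- For `3 ≤ v < N` and `a = ⌊N/v⌋`: `(v−1)·Σ_{i=0}^{a−1} C(N,i) < C(N, a+2)`. -/
theorem stmt13 (N v : ℕ) (hv : 3 ≤ v) (hvN : v < N) :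
    (v - 1) * ∑ i ∈ Finset.range (N / v), N.choose i < N.choose (N / v + 2) := by
  rcases Nat.lt_or_ge N 10 with hN | hN
  · interval_cases N <;> interval_cases v <;> decide
  · have hva : v * (N / v) ≤ N := Nat.mul_div_le N v
    have h3v : 3 * (N / v) ≤ v * (N / v) := Nat.mul_le_mul_right _ hv
    have ha1 : 1 ≤ N / v := (Nat.one_le_div_iff (by omega)).2 (le_of_lt hvN)
    obtain ⟨b, hb⟩ : ∃ b, N / v = b + 1 := ⟨N / v - 1, by omega⟩
    rw [hb] at hva h3v ⊢
    have hsum : ∑ i ∈ Finset.range (b+1), N.choose i < 2 * N.choose b :=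
      sum_lt N b (by omega)
    have hpoly : 2*(v-1)*((b+1)*(b+2)*(b+3)) ≤ (N-b)*(N-b-1)*(N-b-2) :=
      poly N v b hv hvN hN hva
    have hK : 0 < (b+1)*(b+2)*(b+3) := by positivity
    have h2 : (v-1) * (2 * N.choose b) ≤ N.choose (b+3) := by
      have h : ((v-1) * (2 * N.choose b)) * ((b+1)*(b+2)*(b+3))
          ≤ N.choose (b+3) * ((b+1)*(b+2)*(b+3)) := by
        rw [chid N b]
        calc ((v-1) * (2 * N.choose b)) * ((b+1)*(b+2)*(b+3))
            = N.choose b * (2*(v-1)*((b+1)*(b+2)*(b+3))) := by ring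
          _ ≤ N.choose b * ((N-b)*(N-b-1)*(N-b-2)) := Nat.mul_le_mul_left _ hpoly
      exact Nat.le_of_mul_le_mul_right h hK
    have h1 : (v-1) * ∑ i ∈ Finset.range (b+1), N.choose i < (v-1) * (2 * N.choose b) := by
      have hv1 : 0 < v - 1 := by omega
      exact (mul_lt_mul_iff_right₀ hv1).2 hsum
    have : b + 1 + 2 = b + 3 := by omega
    rw [this]
    exact lt_of_lt_of_le h1 h2
end

section
/- Let N and v be integers with 4 ≤ v < N, and let a = ⌊N/v⌋. Then (v−2) · C(N,a) + 2(v−1) · Σ_{i=0}^{a−1} C(N,i) < 2 · C(N, a+1), where C denotes the binomial coefficient. -/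
set_option maxHeartbeats 1000000

open Finset

/-- Certificate for the case `a = ⌊N/v⌋ = 1`. -/
lemma pos14_1 (s w : ℤ) (hs : 0 ≤ s) (hw : 0 ≤ w) :
    0 < 4 + 7*s + s*w + s^2 := by
  nlinarith [mul_nonneg hs hw, mul_nonneg hs hs]

/-- Certificate for the case `a = ⌊N/v⌋ = 2`. -/
lemma pos14_2 (s w : ℤ) (hs : 0 ≤ s) (hw : 0 ≤ w) :
    0 < 12 + 56*w + 30*w^2 + 4*w^3 + 166*s + 87*s*w + 12*s*w^2 + 36*s^2 + 9*s^2*w + 2*s^3 := by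
  nlinarith [mul_nonneg hw hw, mul_nonneg (mul_nonneg hw hw) hw, mul_nonneg hs hw,
    mul_nonneg (mul_nonneg hs hw) hw, mul_nonneg hs hs, mul_nonneg (mul_nonneg hs hs) hw,
    mul_nonneg (mul_nonneg hs hs) hs]

/-- Certificate for the case `a = ⌊N/v⌋ = 3`. -/
lemma pos14_3 (s w : ℤ) (hs : 0 ≤ s) (hw : 0 ≤ w) :
    0 < 912 + 2154*w + 1347*w^2 + 324*w^3 + 27*w^4 + 2230*s + 1922*s*w + 558*s*w^2
      + 54*s*w^3 + 491*s^2 + 264*s^2*w + 36*s^2*w^2 + 38*s^3 + 10*s^3*w + s^4 := by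
  nlinarith [mul_nonneg hw hw, mul_nonneg (mul_nonneg hw hw) hw,
    mul_nonneg (mul_nonneg (mul_nonneg hw hw) hw) hw,
    mul_nonneg hs hw, mul_nonneg (mul_nonneg hs hw) hw,
    mul_nonneg (mul_nonneg (mul_nonneg hs hw) hw) hw,
    mul_nonneg hs hs, mul_nonneg (mul_nonneg hs hs) hw,
    mul_nonneg (mul_nonneg (mul_nonneg hs hs) hw) hw,
    mul_nonneg (mul_nonneg hs hs) hs, mul_nonneg (mul_nonneg (mul_nonneg hs hs) hs) hw,
    mul_nonneg (mul_nonneg hs hs) (mul_nonneg hs hs)]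

/-- Certificate for the coefficient inequality in the case `a = ⌊N/v⌋ ≥ 4`. -/
lemma pos14_K (s b w : ℤ) (hs : 0 ≤ s) (hb : 0 ≤ b) (hw : 0 ≤ w) :
    0 ≤ 6 + 43*w + 12*w^2 + 10*b + 27*b*w + 7*b*w^2 + 2*b^2 + 4*b^2*w + b^2*w^2
      + 32*s + 11*s*w + 8*s*b + 3*s*b*w + 2*s^2 := by
  nlinarith [mul_nonneg hw hw, mul_nonneg hb hw, mul_nonneg (mul_nonneg hb hw) hw,
    mul_nonneg hb hb, mul_nonneg (mul_nonneg hb hb) hw,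
    mul_nonneg (mul_nonneg hb hb) (mul_nonneg hw hw),
    mul_nonneg hs hw, mul_nonneg hs hb, mul_nonneg (mul_nonneg hs hb) hw,
    mul_nonneg hs hs]

/-- Telescoping bound: `(N+1) * Σ_{i<k} C(N,i) + a ≤ a * C(N,k) + 2a * Σ_{i<k} C(N,i)`
for `k ≤ a ≤ N` (i.e. `(N+1-2a)·S + a ≤ a·C(N,k)` stated without natural subtraction). -/
lemma tele_aux14 (N a : ℕ) (haN : a ≤ N) :
    ∀ k, k ≤ a → (N + 1) * (∑ i ∈ range k, N.choose i) + a
      ≤ a * N.choose k + 2 * a * (∑ i ∈ range k, N.choose i) := by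
  intro k
  induction k with
  | zero => intro _; simp
  | succ k ih =>
    intro hk
    have hk' : k ≤ a := by omega
    have ihh := ih hk'
    rw [Finset.sum_range_succ]
    have hid : N.choose (k + 1) * (k + 1) = N.choose k * (N - k) := Nat.choose_succ_right_eq N k
    have hkN : k ≤ N := le_trans hk' haN
    have hsub : a * (N - k) + a * k = a * N := by
      rw [← Nat.mul_add, Nat.sub_add_cancel hkN]
    have hmm : (k + 1) * (N + 1) ≤ a * (N + 1) := Nat.mul_le_mul_right _ hk
    have h2 : (N + 1 + a) * (k + 1) ≤ a * (N - k) + 2 * a * (k + 1) := by linarith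
    have key : (N + 1 + a) * N.choose k * (k + 1)
        ≤ (a * N.choose (k + 1) + 2 * a * N.choose k) * (k + 1) := by
      calc (N + 1 + a) * N.choose k * (k + 1) = ((N + 1 + a) * (k + 1)) * N.choose k := by ring
        _ ≤ (a * (N - k) + 2 * a * (k + 1)) * N.choose k := Nat.mul_le_mul_right _ h2
        _ = a * (N.choose k * (N - k)) + 2 * a * (k + 1) * N.choose k := by ring
        _ = a * (N.choose (k + 1) * (k + 1)) + 2 * a * (k + 1) * N.choose k := by rw [hid]
        _ = (a * N.choose (k + 1) + 2 * a * N.choose k) * (k + 1) := by ring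
    have per : (N + 1 + a) * N.choose k ≤ a * N.choose (k + 1) + 2 * a * N.choose k :=
      Nat.le_of_mul_le_mul_right key k.succ_pos
    linarith

/-- For `4 ≤ v < N` and `a = ⌊N/v⌋`:
`(v−2)·C(N,a) + 2(v−1)·Σ_{i=0}^{a−1} C(N,i) < 2·C(N, a+1)`
(the inequality `((v−2)/2)·C(N,a) + (v−1)·Σ_{i=0}^{a−1} C(N,i) < C(N,a+1)` with the
denominator cleared). -/
theorem stmt14 (N v : ℕ) (hv : 4 ≤ v) (hvN : v < N) :
    (v - 2) * N.choose (N / v) + 2 * (v - 1) * ∑ i ∈ Finset.range (N / v), N.choose i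
      < 2 * N.choose (N / v + 1) := by
  have hv0 : 0 < v := by omega
  have hdm := Nat.div_add_mod N v
  have hmod : N % v < v := Nat.mod_lt N hv0
  have hva : v * (N / v) ≤ N := by omega
  have hNva : N < v * (N / v) + v := by omega
  set a := N / v with ha
  have ha1 : 1 ≤ a := by
    rw [ha]; exact (Nat.one_le_div_iff hv0).mpr (le_of_lt hvN)
  have h4a : 4 * a ≤ N := by nlinarith
  have haN : a ≤ N := by omega
  have hvz : (4:ℤ) ≤ (v:ℤ) := by exact_mod_cast hv
  have hvaz : (v:ℤ) * a ≤ N := by exact_mod_cast hva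
  have hvNz : (v:ℤ) < N := by exact_mod_cast hvN
  -- common binomial identities (as ℤ equalities)
  have hc2 : N.choose 2 * 2 = N * (N - 1) := by
    have := Nat.choose_succ_right_eq N 1
    simpa [Nat.choose_one_right] using this
  have hc2z : (N.choose 2 : ℤ) * 2 = N * ((N:ℤ) - 1) := by
    have h1N : 1 ≤ N := by omega
    zify [h1N] at hc2; linarith [hc2]
  rcases Nat.lt_or_ge a 4 with hsm | hbig
  · -- a ∈ {1, 2, 3} : exact sums and explicit polynomial certificates
    have hc3 : N.choose 3 * 3 = N.choose 2 * (N - 2) := Nat.choose_succ_right_eq N 2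
    have hc3z : (N.choose 3 : ℤ) * 3 = N.choose 2 * ((N:ℤ) - 2) := by
      have h2N : 2 ≤ N := by omega
      zify [h2N] at hc3; linarith [hc3]
    have e6 : (6:ℤ) * N.choose 3 = N * ((N:ℤ) - 1) * ((N:ℤ) - 2) := by
      linear_combination 2 * hc3z + ((N:ℤ) - 2) * hc2z
    interval_cases a
    · -- a = 1
      simp only [Finset.sum_range_one, Nat.choose_zero_right]
      zify [show 2 ≤ v by omega, show 1 ≤ v by omega]
      simp only [Nat.choose_one_right]
      have hcert := pos14_1 ((N:ℤ) - v - 1) ((v:ℤ) - 4) (by linarith) (by linarith)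
      linarith [hc2z, hcert]
    · -- a = 2
      have hsum : ∑ i ∈ Finset.range 2, N.choose i = 1 + N := by
        simp [Finset.sum_range_succ]
      rw [hsum]
      zify [show 2 ≤ v by omega, show 1 ≤ v by omega]
      have hN2v : (2:ℤ) * v ≤ N := by exact_mod_cast (show 2 * v ≤ N by omega)
      have hcert := pos14_2 ((N:ℤ) - 2*v) ((v:ℤ) - 4) (by linarith) (by linarith)
      have e' : ((v:ℤ) - 2) * ((N.choose 2 : ℤ) * 2) = ((v:ℤ) - 2) * (N * ((N:ℤ) - 1)) := by
        rw [hc2z]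
      have key : (((v:ℤ) - 2) * N.choose 2 + 2 * ((v:ℤ) - 1) * (1 + N)) * 6
          < (2 * (N.choose 3 : ℤ)) * 6 := by
        linarith [e', e6, hcert]
      exact lt_of_mul_lt_mul_right key (by norm_num)
    · -- a = 3
      have hc4 : N.choose 4 * 4 = N.choose 3 * (N - 3) := Nat.choose_succ_right_eq N 3
      have hc4z : (N.choose 4 : ℤ) * 4 = N.choose 3 * ((N:ℤ) - 3) := by
        have h3N : 3 ≤ N := by omega
        zify [h3N] at hc4; linarith [hc4]
      have e24 : (24:ℤ) * N.choose 4 = N * ((N:ℤ) - 1) * ((N:ℤ) - 2) * ((N:ℤ) - 3) := by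
        linear_combination 6 * hc4z + ((N:ℤ) - 3) * e6
      have hsum : ∑ i ∈ Finset.range 3, N.choose i = 1 + N + N.choose 2 := by
        simp [Finset.sum_range_succ]
      rw [hsum]
      zify [show 2 ≤ v by omega, show 1 ≤ v by omega]
      have hN3v : (3:ℤ) * v ≤ N := by exact_mod_cast (show 3 * v ≤ N by omega)
      have hcert := pos14_3 ((N:ℤ) - 3*v) ((v:ℤ) - 4) (by linarith) (by linarith)
      have e' : ((v:ℤ) - 2) * ((6:ℤ) * N.choose 3) = ((v:ℤ) - 2) * (N * ((N:ℤ) - 1) * ((N:ℤ) - 2)) := by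
        rw [e6]
      have e2' : ((v:ℤ) - 1) * ((N.choose 2 : ℤ) * 2) = ((v:ℤ) - 1) * (N * ((N:ℤ) - 1)) := by
        rw [hc2z]
      have key : (((v:ℤ) - 2) * N.choose 3 + 2 * ((v:ℤ) - 1) * (1 + N + N.choose 2)) * 12
          < (2 * (N.choose 4 : ℤ)) * 12 := by
        linarith [e', e2', e24, hcert]
      exact lt_of_mul_lt_mul_right key (by norm_num)
  · -- a ≥ 4 : geometric bound via tele_aux14
    have htele := tele_aux14 N a haN a le_rfl
    have hY : N.choose (a + 1) * (a + 1) = N.choose a * (N - a) := Nat.choose_succ_right_eq N a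
    have hX1 : 1 ≤ N.choose a := Nat.choose_pos haN
    set X : ℤ := (N.choose a : ℤ) with hXd
    set Y : ℤ := (N.choose (a+1) : ℤ) with hYd
    set S : ℤ := ((∑ i ∈ Finset.range a, N.choose i : ℕ) : ℤ) with hSd
    have haz : (4:ℤ) ≤ (a:ℤ) := by exact_mod_cast hbig
    have hSz : ((N:ℤ) + 1) * S + a ≤ a * X + 2 * a * S := by
      rw [hXd, hSd]; exact_mod_cast htele
    have hYz : Y * ((a:ℤ) + 1) = X * ((N:ℤ) - a) := by
      rw [hXd, hYd]
      zify [haN] at hY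
      linarith [hY]
    have hX0 : (1:ℤ) ≤ X := by rw [hXd]; exact_mod_cast hX1
    have hS0 : (0:ℤ) ≤ S := by rw [hSd]; positivity
    -- key coefficient inequality
    have hK : ((v:ℤ) - 2) * ((a:ℤ) + 1) * ((N:ℤ) + 1 - 2*a) + 2 * ((v:ℤ) - 1) * a * ((a:ℤ) + 1)
        ≤ 2 * ((N:ℤ) - a) * ((N:ℤ) + 1 - 2*a) := by
      have hcert := pos14_K ((N:ℤ) - v*a) ((a:ℤ) - 4) ((v:ℤ) - 4)
        (by linarith) (by linarith) (by linarith)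
      linarith [hcert]
    have hDpos : (0:ℤ) < (N:ℤ) + 1 - 2*a := by
      have h4az : (4:ℤ) * a ≤ N := by exact_mod_cast h4a
      linarith
    have hS' : ((N:ℤ) + 1 - 2*a) * S + a ≤ a * X := by linarith [hSz]
    have hmul : (((v:ℤ) - 2) * X + 2 * ((v:ℤ) - 1) * S) * (((a:ℤ) + 1) * ((N:ℤ) + 1 - 2*a))
        < (2 * Y) * (((a:ℤ) + 1) * ((N:ℤ) + 1 - 2*a)) := by
      have h3 : 2 * ((v:ℤ) - 1) * ((a:ℤ) + 1) * (((N:ℤ) + 1 - 2*a) * S + a)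
          ≤ 2 * ((v:ℤ) - 1) * ((a:ℤ) + 1) * (a * X) := by
        apply mul_le_mul_of_nonneg_left hS'
        have h1 : (0:ℤ) ≤ 2 * ((v:ℤ) - 1) := by linarith
        have h2 : (0:ℤ) ≤ (a:ℤ) + 1 := by linarith
        exact mul_nonneg h1 h2
      have h4 : (((v:ℤ) - 2) * ((a:ℤ) + 1) * ((N:ℤ) + 1 - 2*a) + 2 * ((v:ℤ) - 1) * a * ((a:ℤ) + 1)) * X
          ≤ (2 * ((N:ℤ) - a) * ((N:ℤ) + 1 - 2*a)) * X :=
        mul_le_mul_of_nonneg_right hK (by linarith)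
      have hYr : (2 * Y) * (((a:ℤ) + 1) * ((N:ℤ) + 1 - 2*a))
          = (2 * ((N:ℤ) - a) * ((N:ℤ) + 1 - 2*a)) * X := by
        linear_combination 2 * ((N:ℤ) + 1 - 2*a) * hYz
      rw [hYr]
      have hpos : (0:ℤ) < 2 * ((v:ℤ) - 1) * ((a:ℤ) + 1) * a := by
        have : (0:ℤ) < (v:ℤ) - 1 := by linarith
        have ha0 : (0:ℤ) < (a:ℤ) := by linarith
        positivity
      linarith [h3, h4, hpos]
    have hfinal : ((v:ℤ) - 2) * X + 2 * ((v:ℤ) - 1) * S < 2 * Y :=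
      lt_of_mul_lt_mul_right hmul (by positivity)
    rw [hXd, hYd, hSd] at hfinal
    push_cast at hfinal
    zify [show 2 ≤ v by omega, show 1 ≤ v by omega]
    linarith [hfinal]
end

section
/- Let N be an integer with N ≥ 4 and let a = ⌊N/3⌋. (1) If N ≡ 0 (mod 3), then C(N, a−1) + 2·C(N, a−2) + C(N, a−3) < C(N, a+1). (2) If N ≡ 1 (mod 3), then C(N,a) + 4·C(N, a−1) + 2·C(N, a−2) < 2·C(N, a+1). -/
lemma chooseZ_ofNat (N j : ℕ) : chooseZ N (j:ℤ) = (N.choose j : ℤ) := by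
  simp [chooseZ]

lemma lem1 (k : ℕ) :
    (3*k+6).choose (k+1) + 3 * (3*k+6).choose k < (3*k+6).choose (k+3) := by
  have e1 := Nat.choose_succ_right_eq (3*k+6) k
  have e2 := Nat.choose_succ_right_eq (3*k+6) (k+1)
  have e3 := Nat.choose_succ_right_eq (3*k+6) (k+2)
  have hp : 0 < (3*k+6).choose k := Nat.choose_pos (by omega)
  have s1 : 3*k+6 - k = 2*k+6 := by omega
  have s2 : 3*k+6 - (k+1) = 2*k+5 := by omega
  have s3 : 3*k+6 - (k+2) = 2*k+4 := by omega
  rw [s1] at e1; rw [s2] at e2; rw [s3] at e3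
  zify at e1 e2 e3 hp ⊢
  nlinarith [e1, e2, e3, hp, sq_nonneg ((k:ℤ)+1), mul_pos hp (show (0:ℤ) < k+1 by positivity)]

lemma lem2 (k : ℕ) :
    (3*k+4).choose (k+1) + 6 * (3*k+4).choose k < 2 * (3*k+4).choose (k+2) := by
  have e1 := Nat.choose_succ_right_eq (3*k+4) k
  have e2 := Nat.choose_succ_right_eq (3*k+4) (k+1)
  have hp : 0 < (3*k+4).choose k := Nat.choose_pos (by omega)
  have s1 : 3*k+4 - k = 2*k+4 := by omega
  have s2 : 3*k+4 - (k+1) = 2*k+3 := by omega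
  rw [s1] at e1; rw [s2] at e2
  zify at e1 e2 hp ⊢
  have hpos : (0:ℤ) < ((k:ℤ)+1)*((k:ℤ)+2) := by positivity
  refine lt_of_mul_lt_mul_right ?_ (le_of_lt hpos)
  have h1 : ((3*k+4).choose (k+1) : ℤ) * (((k:ℤ)+1)*((k:ℤ)+2)) =
      ((3*k+4).choose k : ℤ) * (2*(k:ℤ)+4) * ((k:ℤ)+2) := by
    rw [← mul_assoc, e1]
  nlinarith [e2, hp, h1, mul_pos hp (show (0:ℤ) < (k:ℤ)+2 by positivity)]

/-- For `N ≥ 4` and `a = ⌊N/3⌋`: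
(1) if `N ≡ 0 (mod 3)`, then `C(N,a−1) + 2·C(N,a−2) + C(N,a−3) < C(N,a+1)`;
(2) if `N ≡ 1 (mod 3)`, then `C(N,a) + 4·C(N,a−1) + 2·C(N,a−2) < 2·C(N,a+1)`
(part (2) is `(1/2)·C(N,a) + 2·C(N,a−1) + C(N,a−2) < C(N,a+1)` with the denominator
cleared); here `C(N,j) = 0` for `j < 0`. -/
theorem stmt15 (N : ℕ) (hN : 4 ≤ N) :
    ∀ a : ℤ, a = (N : ℤ) / 3 →
      ((N % 3 = 0 →
          chooseZ N (a - 1) + 2 * chooseZ N (a - 2) + chooseZ N (a - 3)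
            < chooseZ N (a + 1)) ∧
        (N % 3 = 1 →
          chooseZ N a + 4 * chooseZ N (a - 1) + 2 * chooseZ N (a - 2)
            < 2 * chooseZ N (a + 1))) := by
  intro a ha
  constructor
  · intro h0
    obtain ⟨k, rfl⟩ : ∃ k, N = 3*k+6 := ⟨N/3 - 2, by omega⟩
    have hak : a = (k:ℤ)+2 := by omega
    subst hak
    have r1 : (k:ℤ)+2-1 = ((k+1:ℕ):ℤ) := by push_cast; ring
    have r2 : (k:ℤ)+2-2 = ((k:ℕ):ℤ) := by ring
    have r4 : (k:ℤ)+2+1 = ((k+3:ℕ):ℤ) := by push_cast; ring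
    rw [r1, r2, r4, chooseZ_ofNat, chooseZ_ofNat, chooseZ_ofNat]
    have hb : chooseZ (3*k+6) ((k:ℤ)+2-3) ≤ ((3*k+6).choose k : ℤ) := by
      rcases k with _ | j
      · norm_num [chooseZ]
      · have r3 : ((j+1:ℕ):ℤ)+2-3 = ((j:ℕ):ℤ) := by push_cast; ring
        rw [r3, chooseZ_ofNat]
        exact_mod_cast Nat.choose_le_succ_of_lt_half_left
          (show j < (3*(j+1)+6)/2 by omega)
    have := lem1 k
    zify at this
    linarith
  · intro h1
    obtain ⟨k, rfl⟩ : ∃ k, N = 3*k+4 := ⟨N/3 - 1, by omega⟩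
    have hak : a = (k:ℤ)+1 := by omega
    subst hak
    have r0 : (k:ℤ)+1 = ((k+1:ℕ):ℤ) := by push_cast; ring
    have r1 : (k:ℤ)+1-1 = ((k:ℕ):ℤ) := by ring
    have r4 : (k:ℤ)+1+1 = ((k+2:ℕ):ℤ) := by push_cast; ring
    rw [show chooseZ (3*k+4) ((k:ℤ)+1) = ((3*k+4).choose (k+1) : ℤ) by rw [r0, chooseZ_ofNat],
        r1, r4, chooseZ_ofNat, chooseZ_ofNat]
    have hb : chooseZ (3*k+4) ((k:ℤ)+1-2) ≤ ((3*k+4).choose k : ℤ) := by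
      rcases k with _ | j
      · norm_num [chooseZ]
      · have r3 : ((j+1:ℕ):ℤ)+1-2 = ((j:ℕ):ℤ) := by push_cast; ring
        rw [r3, chooseZ_ofNat]
        exact_mod_cast Nat.choose_le_succ_of_lt_half_left
          (show j < (3*(j+1)+4)/2 by omega)
    have := lem2 k
    zify at this
    linarith
end

section
/- Let N and v be integers with 3 ≤ v < N, let f = ⌊(N+1)/v⌋ and d = (f+1)v − N, and let s = Σ_{i=f−d+2}^{f−1} (d−f−1+i)·C(N,i) and s' = Σ_{i=f−v+1}^{f−2} (v−f+i)·C(N,i), with C(N,i) = 0 for i < 0. (1) If N ≢ v−1 (mod v), then s < C(N,f); in particular ⌊(C(N,f) − s)/d⌋ ≥ 0. (2) If N ≡ v−1 (mod v), then 2·⌈s'/(v+1)⌉ ≤ C(N, f−1). -/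
lemma stmt16_aux (N v : ℕ) (hv : 3 ≤ v) :
    ∀ k f : ℕ, k + 2 ≤ v → v * f ≤ N + 1 → f ≤ N →
      (∑ i ∈ Finset.range f, (k + 1 + i - f) * N.choose i) < N.choose f := by
  intro k
  induction k with
  | zero =>
    intro f _ _ hfN
    have hz : (∑ i ∈ Finset.range f, (0 + 1 + i - f) * N.choose i) = 0 := by
      apply Finset.sum_eq_zero
      intro i hi
      have : i < f := Finset.mem_range.mp hi
      have h0 : 0 + 1 + i - f = 0 := by omega
      simp [h0]
    rw [hz]
    exact Nat.choose_pos hfN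
  | succ k ih =>
    intro f hk hvf hfN
    cases f with
    | zero => simp
    | succ g =>
      have hgexp : v * g + v = v * (g + 1) := by ring
      have hg1 : v * g ≤ N + 1 := by omega
      have hgN : g ≤ N := by omega
      have hIH : (∑ i ∈ Finset.range g, (k + 1 + i - g) * N.choose i) < N.choose g :=
        ih g (by omega) hg1 hgN
      rw [Finset.sum_range_succ]
      have htop : (k + 1 + 1 + g - (g + 1)) = k + 1 := by omega
      have hbody : (∑ i ∈ Finset.range g, (k + 1 + 1 + i - (g + 1)) * N.choose i)
          = ∑ i ∈ Finset.range g, (k + 1 + i - g) * N.choose i := by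
        apply Finset.sum_congr rfl
        intro i _
        congr 1
        omega
      rw [htop, hbody]
      have hlt : (∑ i ∈ Finset.range g, (k + 1 + i - g) * N.choose i)
          + (k + 1) * N.choose g < (k + 2) * N.choose g := by nlinarith
      refine lt_of_lt_of_le hlt ?_
      have hkv : k + 2 ≤ v - 1 := by omega
      have hratio : (v - 1) * N.choose g ≤ N.choose (g + 1) := by
        have hmul : N.choose (g + 1) * (g + 1) = N.choose g * (N - g) :=
          Nat.choose_succ_right_eq N g
        have hVg : (v - 1) * (g + 1) ≤ N - g := by
          have e1 : (v - 1) * (g + 1) + (g + 1) = (v - 1 + 1) * (g + 1) := by ring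
          have e2 : v - 1 + 1 = v := by omega
          rw [e2] at e1
          omega
        have hmm : (v - 1) * N.choose g * (g + 1) ≤ N.choose (g + 1) * (g + 1) := by
          rw [hmul]
          calc (v - 1) * N.choose g * (g + 1) = ((v - 1) * (g + 1)) * N.choose g := by ring
            _ ≤ (N - g) * N.choose g := Nat.mul_le_mul_right _ hVg
            _ = N.choose g * (N - g) := by ring
        exact Nat.le_of_mul_le_mul_right hmm (by omega)
      calc (k + 2) * N.choose g ≤ (v - 1) * N.choose g := Nat.mul_le_mul_right _ hkv
        _ ≤ N.choose (g + 1) := hratio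

/-- Well-definedness of the multiplicities in the optimal type `𝓛(N,v)`: with
`f = ⌊(N+1)/v⌋`, `d = (f+1)v − N`, `s = Σ_{i=f−d+2}^{f−1} (d−f−1+i)·C(N,i)` and
`s' = Σ_{i=f−v+1}^{f−2} (v−f+i)·C(N,i)` (terms with negative index vanish; the truncated
lower bounds `f+2-d` and `f+1-v` realize this):
(1) if `N ≢ v−1 (mod v)` then `s < C(N,f)` (so `⌊(C(N,f)−s)/d⌋ ≥ 0`);
(2) if `N ≡ v−1 (mod v)` then `2·⌈s'/(v+1)⌉ ≤ C(N,f−1)`, where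
`⌈s'/(v+1)⌉ = (s'+v)/(v+1)` in natural-number division. -/
theorem stmt16 (N v : ℕ) (hv : 3 ≤ v) (hvN : v < N) :
    ∀ f d s s' : ℕ,
      f = (N + 1) / v →
      d = (f + 1) * v - N →
      s = ∑ i ∈ Finset.Icc (f + 2 - d) (f - 1), (d + i - (f + 1)) * N.choose i →
      s' = ∑ i ∈ Finset.Icc (f + 1 - v) (f - 2), (v + i - f) * N.choose i →
      ((N % v ≠ v - 1 → s < N.choose f) ∧
        (N % v = v - 1 → 2 * ((s' + v) / (v + 1)) ≤ N.choose (f - 1))) := by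
  intro f d s s' hf hd hs hs'
  have hv0 : 0 < v := by omega
  have hmod : N % v < v := Nat.mod_lt N hv0
  have hNdiv : v * (N / v) + N % v = N := Nat.div_add_mod N v
  have hq1 : 1 ≤ N / v := Nat.one_le_div_iff hv0 |>.mpr (le_of_lt hvN)
  constructor
  · -- case 1 : N % v ≠ v - 1
    intro h1
    have hfq : f = N / v := by
      rw [hf]
      apply Nat.div_eq_of_lt_le
      · exact le_trans (Nat.div_mul_le_self N v) (by omega)
      · show N + 1 < (N / v + 1) * v
        have hexp : (N / v + 1) * v = v * (N / v) + v := by ring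
        omega
    have hvf : v * f ≤ N := by rw [hfq]; omega
    have hfN : f ≤ N := by rw [hfq]; exact Nat.div_le_self N v
    have hfexp : (f + 1) * v = v * f + v := by ring
    have hdval : d = v - N % v := by
      rw [hfq] at hd hfexp
      omega
    have hd2l : 2 ≤ d := by omega
    have hd2u : d ≤ v := by omega
    have hf1 : 1 ≤ f := by omega
    have hsub : Finset.Icc (f + 2 - d) (f - 1) ⊆ Finset.range f := by
      intro i hi
      rw [Finset.mem_Icc] at hi
      rw [Finset.mem_range]
      omega
    have hzero : ∀ i ∈ Finset.range f, i ∉ Finset.Icc (f + 2 - d) (f - 1) →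
        (d + i - (f + 1)) * N.choose i = 0 := by
      intro i hi hni
      rw [Finset.mem_range] at hi
      rw [Finset.mem_Icc] at hni
      push_neg at hni
      have h0 : d + i - (f + 1) = 0 := by omega
      simp [h0]
    have hseq : s = ∑ i ∈ Finset.range f, (d - 2 + 1 + i - f) * N.choose i := by
      rw [hs, Finset.sum_subset hsub hzero]
      exact Finset.sum_congr rfl fun i _ => by congr 1; omega
    rw [hseq]
    exact stmt16_aux N v hv (d - 2) f (by omega) (by omega) hfN
  · -- case 2 : N % v = v - 1
    intro h2
    have hfq : f = N / v + 1 := by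
      rw [hf]
      apply Nat.div_eq_of_lt_le
      · show (N / v + 1) * v ≤ N + 1
        have hexp : (N / v + 1) * v = v * (N / v) + v := by ring
        omega
      · show N + 1 < (N / v + 1 + 1) * v
        have hexp : (N / v + 1 + 1) * v = v * (N / v) + 2 * v := by ring
        omega
    have hvf : v * f = N + 1 := by
      rw [hfq]
      have hexp : v * (N / v + 1) = v * (N / v) + v := by ring
      omega
    have hf2 : 2 ≤ f := by omega
    have hfN : f - 1 ≤ N := by
      have h3 : f - 1 = N / v := by omega
      rw [h3]; exact Nat.div_le_self N v
    have hvf1 : v * (f - 1) ≤ N + 1 := by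
      have hff : f - 1 + 1 = f := by omega
      have hexp : v * (f - 1) + v = v * (f - 1 + 1) := by ring
      rw [hff] at hexp
      omega
    have hsub : Finset.Icc (f + 1 - v) (f - 2) ⊆ Finset.range (f - 1) := by
      intro i hi
      rw [Finset.mem_Icc] at hi
      rw [Finset.mem_range]
      omega
    have hzero : ∀ i ∈ Finset.range (f - 1), i ∉ Finset.Icc (f + 1 - v) (f - 2) →
        (v + i - f) * N.choose i = 0 := by
      intro i hi hni
      rw [Finset.mem_range] at hi
      rw [Finset.mem_Icc] at hni
      push_neg at hni
      have h0 : v + i - f = 0 := by omega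
      simp [h0]
    have hseq : s' = ∑ i ∈ Finset.range (f - 1), (v - 2 + 1 + i - (f - 1)) * N.choose i := by
      rw [hs', Finset.sum_subset hsub hzero]
      exact Finset.sum_congr rfl fun i _ => by congr 1; omega
    have hslt : s' < N.choose (f - 1) := by
      rw [hseq]
      exact stmt16_aux N v hv (v - 2) (f - 1) (by omega) hvf1 hfN
    set C := N.choose (f - 1) with hC
    by_cases hC2 : 2 ≤ C
    · have hq : (s' + v) / (v + 1) * (v + 1) ≤ s' + v := Nat.div_mul_le_self _ _
      have hCsub : C - 2 + 2 = C := Nat.sub_add_cancel hC2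
      have hP : (C - 2) * v + 2 * v = C * v := by
        calc (C - 2) * v + 2 * v = ((C - 2) + 2) * v := by ring
          _ = C * v := by rw [hCsub]
      have hP2 : 3 * (C - 2) ≤ (C - 2) * v := by
        calc 3 * (C - 2) = (C - 2) * 3 := by ring
          _ ≤ (C - 2) * v := Nat.mul_le_mul_left _ hv
      have hCv1 : C * (v + 1) = C * v + C := by ring
      have key : 2 * ((s' + v) / (v + 1)) * (v + 1) ≤ C * (v + 1) := by
        have hq2 : 2 * ((s' + v) / (v + 1)) * (v + 1)
            = 2 * ((s' + v) / (v + 1) * (v + 1)) := by ring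
        omega
      exact Nat.le_of_mul_le_mul_right key (by omega)
    · have hC1 : C = 1 := by
        have : 1 ≤ C := by omega
        omega
      have hs0 : s' = 0 := by omega
      have hzz : (s' + v) / (v + 1) = 0 := by
        rw [hs0]
        exact Nat.div_eq_of_lt (by omega)
      omega
end

section
/- Let N and v be integers with 2 ≤ v ≤ N+1. Let LAK_{(1,1)}(N,v) (respectively LAK_{(1̄,1)}(N,v), LAK_{(1,1̄)}(N,v), LAK_{(1̄,1̄)}(N,v)) denote the largest k for which there exists an N×k array on v symbols whose kv fibers are pairwise distinct (respectively: pairwise distinct and all nonempty; pairwise distinct with no fiber equal to the full row set {1,…,N}; pairwise distinct, all nonempty, and no fiber equal to {1,…,N}). Then: (1) LAK_{(1,1̄)}(N,v) = LAK_{(1,1)}(N,v) if v ≥ 3, and LAK_{(1,1̄)}(N,2) = 2^{N−1} − 1; (2) if moreover v ≤ N, then LAK_{(1̄,1̄)}(N,v) = LAK_{(1̄,1)}(N,v). -/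
/-!
Two distinct symbols of a column have disjoint fibers, so a fiber equal to the full row set
forces every other fiber of its column to be empty. With at least three symbols this yields two
equal (empty) fibers, and when all fibers are nonempty it is impossible outright; in both cases
the condition "no full fiber" is automatic, so the two sets of admissible `k` coincide.

On two symbols the fibers of a column are a set and its complement. Distinct fibers, none of them
full, are therefore `2k` distinct nonempty proper subsets of the rows, whence `2k ≤ 2^N - 2`.
Conversely, the `2^(N-1) - 1` proper subsets containing a fixed row, used as the `1`-fibers of
the columns, give an array attaining this bound.
-/

/-- The fiber of the pair `p = (c,σ)` in the `N × k` array `A` on `v` symbols: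
the set of rows `r` with `A r c = σ`. -/
def fiber (N k v : ℕ) (A : Fin N → Fin k → Fin v) (p : Fin k × Fin v) : Set (Fin N) :=
  {r : Fin N | A r p.1 = p.2}

open Function Set

section
variable {N k v : ℕ} (A : Fin N → Fin k → Fin v)

theorem disjoint_fiber {c : Fin k} {σ τ : Fin v} (h : σ ≠ τ) :
    Disjoint (fiber N k v A (c, σ)) (fiber N k v A (c, τ)) :=
  disjoint_left.2 fun _ hσ hτ => h (hσ.symm.trans hτ)

theorem fiber_eq_empty_of_eq_univ {c : Fin k} {σ τ : Fin v} (h : τ ≠ σ)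
    (hσ : fiber N k v A (c, σ) = univ) : fiber N k v A (c, τ) = ∅ :=
  univ_disjoint.1 (hσ ▸ disjoint_fiber A h.symm)

theorem fiber_ne_univ_of_injective (hv : 3 ≤ v) (hA : Injective (fiber N k v A))
    (p : Fin k × Fin v) : fiber N k v A p ≠ univ := by
  obtain ⟨c, σ⟩ := p
  intro hσ
  obtain ⟨a, ha, b, hb, hab⟩ := Finset.one_lt_card.1 <| show 1 < (Finset.univ.erase σ).card by
    rw [Finset.card_erase_of_mem (Finset.mem_univ σ), Finset.card_fin]
    omega
  have hab' := hA ((fiber_eq_empty_of_eq_univ A (Finset.ne_of_mem_erase ha) hσ).trans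
    (fiber_eq_empty_of_eq_univ A (Finset.ne_of_mem_erase hb) hσ).symm)
  exact hab (congrArg Prod.snd hab')

theorem fiber_ne_univ_of_nonempty (hv : 2 ≤ v) (hA : ∀ p, (fiber N k v A p).Nonempty)
    (p : Fin k × Fin v) : fiber N k v A p ≠ univ := by
  obtain ⟨c, σ⟩ := p
  have : Nontrivial (Fin v) := Fin.nontrivial_iff_two_le.2 hv
  obtain ⟨τ, hτ⟩ := exists_ne σ
  exact fun hσ => (hA (c, τ)).ne_empty (fiber_eq_empty_of_eq_univ A hτ hσ)

end

theorem card_nonempty_ne_univ (α : Type*) [Finite α] :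
    Nat.card {s : Set α // s.Nonempty ∧ s ≠ univ} = 2 ^ Nat.card α - 2 := by
  rcases isEmpty_or_nonempty α with hα | hα
  · have : IsEmpty {s : Set α // s.Nonempty ∧ s ≠ univ} :=
      ⟨fun ⟨_, ⟨a, _⟩, _⟩ => isEmptyElim a⟩
    simp
  · have hcompl : {s : Set α | s.Nonempty ∧ s ≠ univ} = {∅, univ}ᶜ := by
      ext s
      simp [nonempty_iff_ne_empty]
    have := Fintype.ofFinite α
    rw [← coe_ofPred, Nat.card_coe_set_eq, hcompl, ncard_compl, ncard_pair empty_ne_univ,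
      Nat.card_eq_fintype_card, Fintype.card_set, Nat.card_eq_fintype_card]

theorem preimage_succ_insert_zero_image_succ {n : ℕ} (T : Set (Fin n)) :
    Fin.succ ⁻¹' insert 0 (Fin.succ '' T) = T := by
  ext i
  simp [Fin.succ_ne_zero]

section Two
variable {N k : ℕ} (A : Fin N → Fin k → Fin 2)

theorem fiber_eq_compl_of_two {c : Fin k} {σ τ : Fin 2} (h : τ ≠ σ) :
    fiber N k 2 A (c, τ) = (fiber N k 2 A (c, σ))ᶜ := by
  ext r
  simp only [fiber, mem_ofPred_eq, mem_compl_iff]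
  omega

theorem nonempty_fiber_of_two (hA : ∀ p, fiber N k 2 A p ≠ univ) (p : Fin k × Fin 2) :
    (fiber N k 2 A p).Nonempty := by
  obtain ⟨c, σ⟩ := p
  rw [fiber_eq_compl_of_two A (σ := σ + 1) (by omega)]
  exact nonempty_compl.2 (hA _)

theorem le_two_pow_pred_sub_one_of_fiber_ne_univ
    (hinj : Injective (fiber N k 2 A)) (hA : ∀ p, fiber N k 2 A p ≠ univ) :
    k ≤ 2 ^ (N - 1) - 1 := by
  have hcard : k * 2 ≤ 2 ^ N - 2 := by
    have := Nat.card_le_card_of_injective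
      (fun p => (⟨fiber N k 2 A p, nonempty_fiber_of_two A hA p, hA p⟩ :
        {s : Set (Fin N) // s.Nonempty ∧ s ≠ univ}))
      fun p q h => hinj (congrArg Subtype.val h)
    simpa [card_nonempty_ne_univ] using this
  cases N with
  | zero => simp at hcard; omega
  | succ n => rw [pow_succ] at hcard; simp; omega

open Classical in
noncomputable def indicatorArray (S : Fin k → Set (Fin N)) : Fin N → Fin k → Fin 2 :=
  fun r c => if r ∈ S c then 1 else 0

variable {S : Fin k → Set (Fin N)}

theorem fiber_indicatorArray_one (c : Fin k) : fiber N k 2 (indicatorArray S) (c, 1) = S c := by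
  ext r
  simp [fiber, indicatorArray]

theorem fiber_indicatorArray_zero (c : Fin k) :
    fiber N k 2 (indicatorArray S) (c, 0) = (S c)ᶜ := by
  rw [fiber_eq_compl_of_two _ (σ := 1) (by decide), fiber_indicatorArray_one]

theorem injective_fiber_indicatorArray {r₀ : Fin N} (h₀ : ∀ c, r₀ ∈ S c)
    (hS : Injective S) : Injective (fiber N k 2 (indicatorArray S)) := by
  rintro ⟨c, σ⟩ ⟨c', σ'⟩ h
  fin_cases σ <;> fin_cases σ' <;>
    simp only [Fin.zero_eta, Fin.mk_one, Fin.isValue, fiber_indicatorArray_zero,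
      fiber_indicatorArray_one, compl_inj_iff, hS.eq_iff, Prod.mk.injEq, zero_ne_one,
      one_ne_zero, and_true, and_false] at h ⊢
  exacts [h, (Set.ext_iff.1 h r₀).2 (h₀ c') (h₀ c),
    (Set.ext_iff.1 h r₀).1 (h₀ c) (h₀ c'), h]

theorem fiber_indicatorArray_ne_univ {r₀ : Fin N} (h₀ : ∀ c, r₀ ∈ S c)
    (hS : ∀ c, S c ≠ univ) (p : Fin k × Fin 2) :
    fiber N k 2 (indicatorArray S) p ≠ univ := by
  obtain ⟨c, σ⟩ := p
  fin_cases σ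
  · simpa [fiber_indicatorArray_zero, ← nonempty_iff_ne_empty] using ⟨r₀, h₀ c⟩
  · simpa [fiber_indicatorArray_one] using hS c

theorem exists_injective_fiber_ne_univ_two (N : ℕ) :
    ∃ A : Fin N → Fin (2 ^ (N - 1) - 1) → Fin 2,
      Injective (fiber N _ 2 A) ∧ ∀ p, fiber N _ 2 A p ≠ univ := by
  cases N with
  | zero => exact ⟨fun _ c => c.elim0, fun p => p.1.elim0, fun p => p.1.elim0⟩
  | succ n =>
    have hcard : Fintype.card {T : Set (Fin n) // T ≠ univ} = 2 ^ (n + 1 - 1) - 1 := by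
      rw [Fintype.card_subtype_compl, Fintype.card_set, Fintype.card_subtype_eq]
      simp
    let e := (Fintype.equivFinOfCardEq hcard).symm
    let S c : Set (Fin (n + 1)) := insert 0 (Fin.succ '' (e c).1)
    have hS : Injective S := fun c c' h => e.injective <| Subtype.ext <| by
      simpa only [S, preimage_succ_insert_zero_image_succ, preimage_univ]
        using congrArg (Fin.succ ⁻¹' ·) h
    have hS_ne : ∀ c, S c ≠ univ := fun c h => (e c).2 <| by
      simpa only [S, preimage_succ_insert_zero_image_succ, preimage_univ]
        using congrArg (Fin.succ ⁻¹' ·) h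
    have h₀ : ∀ c, 0 ∈ S c := fun c => mem_insert _ _
    exact ⟨indicatorArray S, injective_fiber_indicatorArray h₀ hS,
      fiber_indicatorArray_ne_univ h₀ hS_ne⟩

end Two

theorem stmt19_general (N v : ℕ) (hv : 2 ≤ v) :
    (3 ≤ v →
      sSup {k : ℕ | ∃ A : Fin N → Fin k → Fin v,
          Function.Injective (fiber N k v A) ∧ ∀ p, fiber N k v A p ≠ Set.univ}
        = sSup {k : ℕ | ∃ A : Fin N → Fin k → Fin v,
            Function.Injective (fiber N k v A)}) ∧
    (sSup {k : ℕ | ∃ A : Fin N → Fin k → Fin 2,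
          Function.Injective (fiber N k 2 A) ∧ ∀ p, fiber N k 2 A p ≠ Set.univ}
        = 2 ^ (N - 1) - 1) ∧
    (v ≤ N →
      sSup {k : ℕ | ∃ A : Fin N → Fin k → Fin v,
          Function.Injective (fiber N k v A) ∧ (∀ p, (fiber N k v A p).Nonempty) ∧
          ∀ p, fiber N k v A p ≠ Set.univ}
        = sSup {k : ℕ | ∃ A : Fin N → Fin k → Fin v,
            Function.Injective (fiber N k v A) ∧ ∀ p, (fiber N k v A p).Nonempty}) := by
  refine ⟨fun hv3 => ?_, ?_, fun _ => ?_⟩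
  · congr 1
    ext k
    exact exists_congr fun A => and_iff_left_of_imp (fiber_ne_univ_of_injective A hv3)
  · have hbound : ∀ k ∈ {k : ℕ | ∃ A : Fin N → Fin k → Fin 2,
        Injective (fiber N k 2 A) ∧ ∀ p, fiber N k 2 A p ≠ univ}, k ≤ 2 ^ (N - 1) - 1 :=
      fun _ ⟨_, hinj, hA⟩ => le_two_pow_pred_sub_one_of_fiber_ne_univ _ hinj hA
    have hmem := exists_injective_fiber_ne_univ_two N
    exact le_antisymm (csSup_le ⟨_, hmem⟩ hbound) (le_csSup ⟨_, hbound⟩ hmem)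
  · congr 1
    ext k
    exact exists_congr fun A => and_congr_right fun _ =>
      and_iff_left_of_imp fun hne => fiber_ne_univ_of_nonempty A hv hne

/-- Let `LAK_{(1,1)}(N,v)` (resp. `LAK_{(1̄,1)}`, `LAK_{(1,1̄)}`, `LAK_{(1̄,1̄)}`) be the
largest `k` admitting an `N × k` array on `v` symbols whose `k·v` fibers are pairwise
distinct (resp. pairwise distinct and all nonempty; pairwise distinct with no fiber
equal to the full row set; pairwise distinct, all nonempty, and with no fiber equal to
the full row set). For `2 ≤ v ≤ N+1`:
(1) `LAK_{(1,1̄)}(N,v) = LAK_{(1,1)}(N,v)` if `v ≥ 3`, and `LAK_{(1,1̄)}(N,2) = 2^{N−1}−1`;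
(2) if moreover `v ≤ N`, then `LAK_{(1̄,1̄)}(N,v) = LAK_{(1̄,1)}(N,v)`. -/
theorem stmt19 (N v : ℕ) (hv : 2 ≤ v) (hvN : v ≤ N + 1) :
    (3 ≤ v →
      sSup {k : ℕ | ∃ A : Fin N → Fin k → Fin v,
          Function.Injective (fiber N k v A) ∧ ∀ p, fiber N k v A p ≠ Set.univ}
        = sSup {k : ℕ | ∃ A : Fin N → Fin k → Fin v,
            Function.Injective (fiber N k v A)}) ∧
    (sSup {k : ℕ | ∃ A : Fin N → Fin k → Fin 2,
          Function.Injective (fiber N k 2 A) ∧ ∀ p, fiber N k 2 A p ≠ Set.univ}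
        = 2 ^ (N - 1) - 1) ∧
    (v ≤ N →
      sSup {k : ℕ | ∃ A : Fin N → Fin k → Fin v,
          Function.Injective (fiber N k v A) ∧ (∀ p, (fiber N k v A p).Nonempty) ∧
          ∀ p, fiber N k v A p ≠ Set.univ}
        = sSup {k : ℕ | ∃ A : Fin N → Fin k → Fin v,
            Function.Injective (fiber N k v A) ∧ ∀ p, (fiber N k v A p).Nonempty}) :=
  stmt19_general N v hv
end
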